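/- arXiv:2210.09047 — 5 statements merged into one kernel-verified Lean document; each statement's English description precedes it below -/
import Mathlib

section
/- Let X be a real random variable with finite expectation whose cumulative distribution function F is continuous, and let s ∈ (−1,0) ∪ (0,∞). Then the cumulative Tsallis entropy Δ_s(X) := E[F(X)^s · μ̄(X)] satisfies Δ_s(X) = (1/s) ∫_ℝ F(x)(1 − F(x)^s) dx as elements of (0,∞], and moreover Δ_s(X) < ∞ whenever s > 0. -/
open MeasureTheory Set ProbabilityTheory Filter ENNReal

/-!
Write `F` for the distribution function of the law `ν` of `X`. Off a `ν`-null set `F > 0`, and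
there `F(t)^s μ̄(t) = F(t)^(s-1) ∫_{x ≤ t} F(x) dx`. Tonelli exchanges the two integrals, so that
`Δ_s(X) = ∫ F(x) (∫_{t ≥ x} F(t)^(s-1) dν(t)) dx`. Since `F` is continuous, `F(X)` is uniform on
`(0, 1]`, and `{t ≥ x}` agrees `ν`-a.e. with `{F(t) ≥ F(x)}`; hence the inner integral is
`∫_{F(x)}^1 u^(s-1) du = (1 - F(x)^s)/s`. The integrand `F(1 - F^s)/s` is positive on the nonempty
open set `{0 < F < 1}`, and for `s > 0` it is at most `C F` and at most `C (1 - F)`, which are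
integrable near `-∞` and `+∞` respectively because `X` is integrable.
-/

theorem Monotone.exists_preimage_Iic_eq_Iic {f : ℝ → ℝ} (hf : Monotone f) (hcont : Continuous f)
    {u : ℝ} (hle : ∃ a, f a ≤ u) (hlt : ∃ b, u < f b) : ∃ a, f a = u ∧ f ⁻¹' Iic u = Iic a := by
  obtain ⟨b, hb⟩ := hlt
  have hbdd : BddAbove (f ⁻¹' Iic u) :=
    ⟨b, fun t ht => le_of_not_gt fun hbt => (hb.trans_le (hf hbt.le)).not_ge ht⟩
  set a := sSup (f ⁻¹' Iic u)
  have ha : f a ≤ u := (isClosed_Iic.preimage hcont).csSup_mem hle hbdd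
  have hab : a ≤ b := le_of_not_gt fun hba => (hb.trans_le (hf hba.le)).not_ge ha
  obtain ⟨c, hc, hcu⟩ := intermediate_value_Icc hab hcont.continuousOn ⟨ha, hb.le⟩
  have hca : c = a := le_antisymm (le_csSup hbdd hcu.le) hc.1
  exact ⟨a, hca ▸ hcu, Subset.antisymm (fun t ht => le_csSup hbdd ht) fun t ht => (hf ht).trans ha⟩

theorem lintegral_mul_setLIntegral_Iic_comm {α : Type*} [MeasurableSpace α] [TopologicalSpace α]
    [LinearOrder α] [OrderClosedTopology α] [OpensMeasurableSpace α] [SecondCountableTopology α]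
    {μ ν : Measure α} [SFinite μ] [SFinite ν] {f g : α → ℝ≥0∞} (hf : Measurable f)
    (hg : Measurable g) :
    ∫⁻ t, f t * ∫⁻ x in Iic t, g x ∂μ ∂ν = ∫⁻ x, g x * ∫⁻ t in Ici x, f t ∂ν ∂μ := by
  let k : α → α → ℝ≥0∞ := fun t x => if x ≤ t then f t * g x else 0
  have hk : Measurable (Function.uncurry k) :=
    Measurable.ite (measurableSet_le measurable_snd measurable_fst)
      ((hf.comp measurable_fst).mul (hg.comp measurable_snd)) measurable_const
  calc ∫⁻ t, f t * ∫⁻ x in Iic t, g x ∂μ ∂ν = ∫⁻ t, ∫⁻ x, k t x ∂μ ∂ν := by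
        refine lintegral_congr fun t => ?_
        rw [← lintegral_const_mul _ hg, ← lintegral_indicator measurableSet_Iic]
        congr 1 with x
        simp only [k, indicator_apply, mem_Iic]
    _ = ∫⁻ x, ∫⁻ t, k t x ∂ν ∂μ := lintegral_lintegral_swap hk.aemeasurable
    _ = ∫⁻ x, g x * ∫⁻ t in Ici x, f t ∂ν ∂μ := by
        refine lintegral_congr fun x => ?_
        rw [← lintegral_const_mul _ hf, ← lintegral_indicator measurableSet_Ici]
        congr 1 with t
        simp only [k, indicator_apply, mem_Ici, mul_comm]

theorem setLIntegral_Icc_rpow_sub_one {a b s : ℝ} (ha : 0 < a) (hab : a ≤ b) (hs : s ≠ 0) :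
    ∫⁻ u in Icc a b, ENNReal.ofReal (u ^ (s - 1)) = ENNReal.ofReal ((b ^ s - a ^ s) / s) := by
  have hcont : ContinuousOn (fun u : ℝ => u ^ (s - 1)) (Icc a b) := fun u hu =>
    (Real.continuousAt_rpow_const _ _ (Or.inl (ha.trans_le hu.1).ne')).continuousWithinAt
  have hnonneg : 0 ≤ᵐ[volume.restrict (Icc a b)] fun u : ℝ => u ^ (s - 1) := by
    filter_upwards [ae_restrict_mem measurableSet_Icc] with u hu
    exact Real.rpow_nonneg (ha.le.trans hu.1) _
  have h0 : (0 : ℝ) ∉ uIcc a b := by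
    rw [uIcc_of_le hab]
    exact fun h => ha.not_ge h.1
  rw [← ofReal_integral_eq_lintegral_ofReal hcont.integrableOn_Icc hnonneg,
    integral_Icc_eq_integral_Ioc, ← intervalIntegral.integral_of_le hab,
    integral_rpow (Or.inr ⟨fun h => hs (by linarith), h0⟩), sub_add_cancel]

theorem one_div_mul_mul_one_sub_rpow_pos {s u : ℝ} (hs : s ≠ 0) (hu0 : 0 < u) (hu1 : u < 1) :
    0 < 1 / s * (u * (1 - u ^ s)) := by
  rcases hs.lt_or_gt with hs | hs
  · have hus : 1 < u ^ s := Real.one_lt_rpow_of_pos_of_lt_one_of_neg hu0 hu1 hs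
    exact mul_pos_of_neg_of_neg (by simpa using hs) (mul_neg_of_pos_of_neg hu0 (by linarith))
  · have hus : u ^ s < 1 := Real.rpow_lt_one hu0.le hu1 hs
    exact mul_pos (by positivity) (mul_pos hu0 (by linarith))

theorem one_div_mul_mul_one_sub_rpow_le {s u : ℝ} (hs : 0 < s) (hu0 : 0 ≤ u) :
    1 / s * (u * (1 - u ^ s)) ≤ 1 / s * u :=
  mul_le_mul_of_nonneg_left
    (mul_le_of_le_one_right hu0 (by linarith [Real.rpow_nonneg hu0 s])) (by positivity)

theorem one_div_mul_mul_one_sub_rpow_le_max_mul {s u : ℝ} (hs : 0 < s) (hu0 : 0 ≤ u)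
    (hu1 : u ≤ 1) : 1 / s * (u * (1 - u ^ s)) ≤ max 1 (1 / s) * (1 - u) := by
  have hus : u ^ s ≤ 1 := Real.rpow_le_one hu0 hu1 hs.le
  have hdrop : 1 / s * (u * (1 - u ^ s)) ≤ 1 / s * (1 - u ^ s) :=
    mul_le_mul_of_nonneg_left (mul_le_of_le_one_left (by linarith) hu1) (by positivity)
  refine hdrop.trans ?_
  rcases le_total s 1 with hs1 | hs1
  · have hle : u ≤ u ^ s := by
      simpa using Real.rpow_le_rpow_of_exponent_ge' hu0 hu1 hs.le hs1
    calc 1 / s * (1 - u ^ s) ≤ 1 / s * (1 - u) :=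
          mul_le_mul_of_nonneg_left (by linarith) (by positivity)
      _ ≤ max 1 (1 / s) * (1 - u) :=
          mul_le_mul_of_nonneg_right (le_max_right _ _) (by linarith)
  · -- Bernoulli's inequality `1 + s (u - 1) ≤ u ^ s`
    have hbern := one_add_mul_self_le_rpow_one_add (show -1 ≤ u - 1 by linarith) hs1
    rw [add_sub_cancel] at hbern
    calc 1 / s * (1 - u ^ s) ≤ 1 - u := by
          rw [div_mul_eq_mul_div, one_mul, div_le_iff₀ hs]
          nlinarith
      _ ≤ max 1 (1 / s) * (1 - u) :=
          le_mul_of_one_le_left (by linarith) (le_max_left _ _)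

noncomputable def meanInactivityTime (ν : Measure ℝ) (t : ℝ) : ℝ :=
  if 0 < cdf ν t then (∫ x in Iic t, cdf ν x) / cdf ν t else 0

noncomputable def cumulativeTsallisEntropy (ν : Measure ℝ) (s : ℝ) : ℝ≥0∞ :=
  ∫⁻ t, ENNReal.ofReal (cdf ν t ^ s * meanInactivityTime ν t) ∂ν

section Cdf

variable {ν : Measure ℝ}

@[fun_prop]
theorem measurable_cdf : Measurable (cdf ν) := (monotone_cdf ν).measurable

theorem setIntegral_Iic_cdf_eq_toReal (t : ℝ) :
    ∫ x in Iic t, cdf ν x = (∫⁻ x in Iic t, ENNReal.ofReal (cdf ν x)).toReal :=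
  integral_eq_lintegral_of_nonneg_ae (ae_of_all _ (cdf_nonneg ν))
    measurable_cdf.aestronglyMeasurable

@[fun_prop]
theorem measurable_meanInactivityTime : Measurable (meanInactivityTime ν) := by
  have hnum : Monotone fun t => ∫⁻ x in Iic t, ENNReal.ofReal (cdf ν x) :=
    fun _ _ hab => lintegral_mono_set (Iic_subset_Iic.2 hab)
  unfold meanInactivityTime
  simp only [setIntegral_Iic_cdf_eq_toReal]
  exact Measurable.ite (measurableSet_lt measurable_const measurable_cdf)
    (hnum.measurable.ennreal_toReal.div measurable_cdf) measurable_const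

theorem lintegral_ofReal_cdf_mul_one_sub_rpow_pos (hc : Continuous (cdf ν)) {s : ℝ}
    (hs : s ≠ 0) : 0 < ∫⁻ x, ENNReal.ofReal (1 / s * (cdf ν x * (1 - cdf ν x ^ s))) := by
  obtain ⟨x₀, hx₀⟩ : (1 / 2 : ℝ) ∈ range (cdf ν) := mem_range_of_exists_le_of_exists_ge hc
    ((tendsto_cdf_atBot ν).eventually (eventually_le_nhds (by norm_num))).exists
    ((tendsto_cdf_atTop ν).eventually (eventually_ge_nhds (by norm_num))).exists
  have hU : IsOpen (cdf ν ⁻¹' Ioo 0 1) := isOpen_Ioo.preimage hc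
  rw [lintegral_pos_iff_support (by fun_prop)]
  refine (hU.measure_pos volume ⟨x₀, by norm_num [hx₀]⟩).trans_le (measure_mono fun x hx => ?_)
  exact (ofReal_pos.2 (one_div_mul_mul_one_sub_rpow_pos hs hx.1 hx.2)).ne'

variable [IsProbabilityMeasure ν]

theorem map_cdf_eq_volume_restrict_Ioc (hc : Continuous (cdf ν)) :
    ν.map (cdf ν) = volume.restrict (Ioc 0 1) := by
  have : IsProbabilityMeasure (ν.map (cdf ν)) :=
    Measure.isProbabilityMeasure_map measurable_cdf.aemeasurable
  refine Measure.ext_of_Iic _ _ fun u => ?_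
  rw [Measure.map_apply measurable_cdf measurableSet_Iic, Measure.restrict_apply measurableSet_Iic]
  rcases le_or_gt 1 u with hu1 | hu1
  · rw [preimage_eq_univ_iff.2 (range_subset_iff.2 fun t => (cdf_le_one ν t).trans hu1),
      measure_univ, inter_eq_right.2 (Ioc_subset_Iic_self.trans (Iic_subset_Iic.2 hu1)), Real.volume_Ioc]
    simp
  have hvol : volume (Iic u ∩ Ioc 0 1) = ENNReal.ofReal u := by
    rw [Iic_inter_Ioc_of_le hu1.le, Real.volume_Ioc, sub_zero]
  rw [hvol]
  by_cases hle : ∃ a, cdf ν a ≤ u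
  · obtain ⟨a, rfl, ha⟩ := (monotone_cdf ν).exists_preimage_Iic_eq_Iic hc hle
      ((tendsto_cdf_atTop ν).eventually (eventually_gt_nhds hu1)).exists
    rw [ha, ofReal_cdf]
  · push Not at hle
    have hu0 : u ≤ 0 := ge_of_tendsto' (tendsto_cdf_atBot ν) fun a => (hle a).le
    rw [preimage_eq_empty (disjoint_left.2 fun _ hu ⟨t, ht⟩ => (hle t).not_ge (ht ▸ hu)),
      measure_empty, ENNReal.ofReal_of_nonpos hu0]

theorem ae_cdf_pos (hc : Continuous (cdf ν)) : ∀ᵐ t ∂ν, 0 < cdf ν t := by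
  refine ae_of_ae_map measurable_cdf.aemeasurable (p := fun u => 0 < u) ?_
  rw [map_cdf_eq_volume_restrict_Ioc hc]
  exact (ae_restrict_mem measurableSet_Ioc).mono fun _ hu => hu.1

theorem measure_setOf_cdf_lt (hc : Continuous (cdf ν)) {c : ℝ} (hc1 : c ≤ 1) :
    ν {t | cdf ν t < c} = ENNReal.ofReal c := by
  have hset : Iio c ∩ Ioc 0 1 = Ioo 0 c := by
    ext u
    simp only [mem_inter_iff, mem_Iio, mem_Ioc, mem_Ioo]
    exact ⟨fun ⟨hu, hu0, _⟩ => ⟨hu0, hu⟩, fun ⟨hu0, hu⟩ => ⟨hu, hu0, by linarith⟩⟩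
  change ν (cdf ν ⁻¹' Iio c) = _
  rw [← Measure.map_apply measurable_cdf measurableSet_Iio, map_cdf_eq_volume_restrict_Ioc hc,
    Measure.restrict_apply measurableSet_Iio, hset, Real.volume_Ioo, sub_zero]

theorem Ici_ae_eq_setOf_cdf_le (hc : Continuous (cdf ν)) (x : ℝ) :
    Ici x =ᵐ[ν] {t | cdf ν x ≤ cdf ν t} := by
  have hsub : Ici x ⊆ {t | cdf ν x ≤ cdf ν t} := fun _ ht => monotone_cdf ν ht
  have hlt : {t | cdf ν t < cdf ν x} ⊆ Iic x := fun t ht =>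
    le_of_not_gt fun hxt => ht.not_ge (monotone_cdf ν hxt.le)
  have hnull : ν (Iic x \ {t | cdf ν t < cdf ν x}) = 0 := by
    rw [measure_sdiff hlt (measurableSet_lt measurable_cdf measurable_const).nullMeasurableSet
      (measure_ne_top _ _), ← ofReal_cdf, measure_setOf_cdf_lt hc (cdf_le_one ν x), tsub_self]
  refine ae_eq_set.2 ⟨by rw [sdiff_eq_empty.2 hsub, measure_empty], measure_mono_null ?_ hnull⟩
  rintro t ⟨ht, htx⟩
  exact ⟨show t ≤ x from (not_le.1 htx).le, fun h => h.not_ge (show cdf ν x ≤ cdf ν t from ht)⟩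

theorem setLIntegral_Ici_cdf_rpow_sub_one (hc : Continuous (cdf ν)) {s : ℝ} (hs : s ≠ 0) {x : ℝ}
    (hx : 0 < cdf ν x) :
    ∫⁻ t in Ici x, ENNReal.ofReal (cdf ν t ^ (s - 1)) ∂ν
      = ENNReal.ofReal ((1 - cdf ν x ^ s) / s) := by
  have hset : Ici (cdf ν x) ∩ Ioc 0 1 = Icc (cdf ν x) 1 := by
    ext u
    simp only [mem_inter_iff, mem_Ici, mem_Ioc, mem_Icc]
    exact ⟨fun ⟨h, _, h1⟩ => ⟨h, h1⟩, fun ⟨h, h1⟩ => ⟨h, hx.trans_le h, h1⟩⟩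
  calc ∫⁻ t in Ici x, ENNReal.ofReal (cdf ν t ^ (s - 1)) ∂ν
      = ∫⁻ t in cdf ν ⁻¹' Ici (cdf ν x), ENNReal.ofReal (cdf ν t ^ (s - 1)) ∂ν :=
        setLIntegral_congr (Ici_ae_eq_setOf_cdf_le hc x)
    _ = ∫⁻ u in Ici (cdf ν x), ENNReal.ofReal (u ^ (s - 1)) ∂(ν.map (cdf ν)) :=
        (setLIntegral_map (f := fun u => ENNReal.ofReal (u ^ (s - 1))) measurableSet_Ici
          (by fun_prop) measurable_cdf).symm
    _ = ENNReal.ofReal ((1 - cdf ν x ^ s) / s) := by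
        rw [map_cdf_eq_volume_restrict_Ioc hc, Measure.restrict_restrict measurableSet_Ici, hset,
          setLIntegral_Icc_rpow_sub_one hx (cdf_le_one ν x) hs, Real.one_rpow]

end Cdf

section Integrable

variable {ν : Measure ℝ} [IsProbabilityMeasure ν]

theorem setLIntegral_Iic_ofReal_cdf_lt_top (hν : Integrable id ν) (c : ℝ) :
    ∫⁻ x in Iic c, ENNReal.ofReal (cdf ν x) < ⊤ := by
  have key := lintegral_mul_setLIntegral_Iic_comm (μ := ν) (ν := volume.restrict (Iic c))
    (f := 1) (g := 1) measurable_const measurable_const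
  simp only [Pi.one_apply, one_mul, setLIntegral_one,
    Measure.restrict_apply measurableSet_Ici, Ici_inter_Iic, Real.volume_Icc] at key
  simp only [ofReal_cdf, key]
  exact ((integrable_const c).sub hν).lintegral_lt_top

theorem setLIntegral_Ioi_ofReal_one_sub_cdf_lt_top (hν : Integrable id ν) (c : ℝ) :
    ∫⁻ x in Ioi c, ENNReal.ofReal (1 - cdf ν x) < ⊤ := by
  have key := lintegral_mul_setLIntegral_Iic_comm (μ := volume.restrict (Ioi c)) (ν := ν)
    (f := 1) (g := 1) measurable_const measurable_const
  simp only [Pi.one_apply, one_mul, setLIntegral_one,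
    Measure.restrict_apply measurableSet_Iic, Iic_inter_Ioi, Real.volume_Ioc] at key
  have htail (x : ℝ) : ENNReal.ofReal (1 - cdf ν x) ≤ ν (Ici x) := by
    rw [ENNReal.ofReal_sub _ (cdf_nonneg ν x), ofReal_one, ofReal_cdf, ← prob_compl_eq_one_sub
      measurableSet_Iic, compl_Iic]
    exact measure_mono Ioi_subset_Ici_self
  calc ∫⁻ x in Ioi c, ENNReal.ofReal (1 - cdf ν x) ≤ ∫⁻ x in Ioi c, ν (Ici x) :=
        lintegral_mono htail
    _ = ∫⁻ t, ENNReal.ofReal (t - c) ∂ν := key.symm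
    _ < ⊤ := (hν.sub (integrable_const c)).lintegral_lt_top

theorem lintegral_ofReal_cdf_mul_one_sub_rpow_lt_top (hν : Integrable id ν) {s : ℝ}
    (hs : 0 < s) : ∫⁻ x, ENNReal.ofReal (1 / s * (cdf ν x * (1 - cdf ν x ^ s))) < ⊤ := by
  rw [← lintegral_add_compl _ (measurableSet_Iic (a := 0)), compl_Iic]
  refine add_lt_top.2 ⟨?_, ?_⟩
  · calc _ ≤ ∫⁻ x in Iic 0, ENNReal.ofReal (1 / s) * ENNReal.ofReal (cdf ν x) := by
          refine lintegral_mono fun x => ?_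
          rw [← ofReal_mul (by positivity)]
          exact ofReal_le_ofReal (one_div_mul_mul_one_sub_rpow_le hs (cdf_nonneg ν x))
      _ < ⊤ := by
          rw [lintegral_const_mul' _ _ ofReal_ne_top]
          exact mul_lt_top ofReal_lt_top (setLIntegral_Iic_ofReal_cdf_lt_top hν 0)
  · calc _ ≤ ∫⁻ x in Ioi 0, ENNReal.ofReal (max 1 (1 / s)) * ENNReal.ofReal (1 - cdf ν x) := by
          refine lintegral_mono fun x => ?_
          rw [← ofReal_mul (by positivity)]
          exact ofReal_le_ofReal
            (one_div_mul_mul_one_sub_rpow_le_max_mul hs (cdf_nonneg ν x) (cdf_le_one ν x))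
      _ < ⊤ := by
          rw [lintegral_const_mul' _ _ ofReal_ne_top]
          exact mul_lt_top ofReal_lt_top (setLIntegral_Ioi_ofReal_one_sub_cdf_lt_top hν 0)

theorem ofReal_cdf_rpow_mul_meanInactivityTime_ae (hc : Continuous (cdf ν))
    (hν : Integrable id ν) (s : ℝ) :
    ∀ᵐ t ∂ν, ENNReal.ofReal (cdf ν t ^ s * meanInactivityTime ν t)
      = ENNReal.ofReal (cdf ν t ^ (s - 1)) * ∫⁻ x in Iic t, ENNReal.ofReal (cdf ν x) := by
  filter_upwards [ae_cdf_pos hc] with t ht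
  have hfin := (setLIntegral_Iic_ofReal_cdf_lt_top hν t).ne
  rw [meanInactivityTime, if_pos ht, setIntegral_Iic_cdf_eq_toReal, Real.rpow_sub_one ht.ne',
    ← ofReal_toReal hfin, ← ofReal_mul (by positivity), ofReal_toReal hfin]
  ring_nf

theorem cumulativeTsallisEntropy_eq_lintegral (hc : Continuous (cdf ν)) (hν : Integrable id ν)
    {s : ℝ} (hs : s ≠ 0) :
    cumulativeTsallisEntropy ν s
      = ∫⁻ x, ENNReal.ofReal (1 / s * (cdf ν x * (1 - cdf ν x ^ s))) := by
  calc cumulativeTsallisEntropy ν s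
      = ∫⁻ t, ENNReal.ofReal (cdf ν t ^ (s - 1)) * (∫⁻ x in Iic t, ENNReal.ofReal (cdf ν x)) ∂ν :=
        lintegral_congr_ae (ofReal_cdf_rpow_mul_meanInactivityTime_ae hc hν s)
    _ = ∫⁻ x, ENNReal.ofReal (cdf ν x) * ∫⁻ t in Ici x, ENNReal.ofReal (cdf ν t ^ (s - 1)) ∂ν :=
        lintegral_mul_setLIntegral_Iic_comm (by fun_prop) (by fun_prop)
    _ = ∫⁻ x, ENNReal.ofReal (1 / s * (cdf ν x * (1 - cdf ν x ^ s))) := by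
        refine lintegral_congr fun x => ?_
        rcases (cdf_nonneg ν x).eq_or_lt with h0 | hpos
        · simp [← h0]
        · rw [setLIntegral_Ici_cdf_rpow_sub_one hc hs hpos, ← ofReal_mul hpos.le]
          ring_nf

end Integrable

/-- For an integrable real random variable `X` with continuous cdf `F`
and mean inactivity time `μ̄`, and `s ∈ (−1,0) ∪ (0,∞)`, the cumulative Tsallis entropy
`Δ_s(X) = E[F(X)^s ⋅ μ̄(X)]` equals `(1/s) ∫_ℝ F(x)(1 − F(x)^s) dx` in `(0,∞]`,
and is finite whenever `s > 0`. -/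
theorem cumulative_tsallis_entropy_integral_repr
    {Ω : Type*} [MeasureSpace Ω] [IsProbabilityMeasure (volume : Measure Ω)]
    (X : Ω → ℝ) (hXm : Measurable X) (hXint : Integrable X)
    (F : ℝ → ℝ) (hF : ∀ x, F x = ((volume : Measure Ω) {ω | X ω ≤ x}).toReal)
    (hFcont : Continuous F)
    (mbar : ℝ → ℝ)
    (hmbar : ∀ t, mbar t = if 0 < F t then (∫ x in Iic t, F x) / F t else 0)
    (s : ℝ) (hs : s ∈ Ioo (-1 : ℝ) 0 ∪ Ioi (0 : ℝ)) :
    (∫⁻ ω, ENNReal.ofReal (F (X ω) ^ s * mbar (X ω)) ∂(volume : Measure Ω))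
        = ∫⁻ x : ℝ, ENNReal.ofReal ((1 / s) * (F x * (1 - F x ^ s)))
      ∧ 0 < ∫⁻ ω, ENNReal.ofReal (F (X ω) ^ s * mbar (X ω)) ∂(volume : Measure Ω)
      ∧ (0 < s →
          (∫⁻ ω, ENNReal.ofReal (F (X ω) ^ s * mbar (X ω)) ∂(volume : Measure Ω)) < ⊤) := by
  set ν := (volume : Measure Ω).map X
  have : IsProbabilityMeasure ν := Measure.isProbabilityMeasure_map hXm.aemeasurable
  obtain rfl : F = cdf ν := funext fun x => by
    rw [hF, cdf_eq_real, map_measureReal_apply hXm measurableSet_Iic, measureReal_def]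
    rfl
  obtain rfl : mbar = meanInactivityTime ν := funext hmbar
  have hν : Integrable id ν :=
    (integrable_map_measure aestronglyMeasurable_id hXm.aemeasurable).2 hXint
  have hs0 : s ≠ 0 := hs.elim (fun h => h.2.ne) fun h => (mem_Ioi.1 h).ne'
  have hΔ : ∫⁻ ω, ENNReal.ofReal (cdf ν (X ω) ^ s * meanInactivityTime ν (X ω))
      = cumulativeTsallisEntropy ν s := by
    rw [cumulativeTsallisEntropy, lintegral_map (by fun_prop) hXm]
  rw [hΔ, cumulativeTsallisEntropy_eq_lintegral hFcont hν hs0]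
  exact ⟨rfl, lintegral_ofReal_cdf_mul_one_sub_rpow_pos hFcont hs0,
    fun hs_pos => lintegral_ofReal_cdf_mul_one_sub_rpow_lt_top hν hs_pos⟩
end

section
/- Let X be a real random variable with finite expectation whose cumulative distribution function F is continuous, and let s ∈ (−1,0). Then the cumulative Tsallis entropy Δ_s(X) = (1/s) ∫_ℝ F(x)(1 − F(x)^s) dx is finite if and only if ∫_{−∞}^0 F(x)^{1+s} dx < ∞. -/
/-!
Since `F (1 - F ^ s) = F - F ^ (1 + s)`, the integrand of `Δ_s` is a positive multiple of
`F ^ (1 + s) - F`, which lies between `0` and `1 - F` and differs from `F ^ (1 + s)` by at most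
`F`. For integrable `X` both tails `∫_{-∞}^0 F` and `∫_0^∞ (1 - F)` are finite (layer-cake
formula for `X⁺` and `X⁻`), so finiteness of `Δ_s(X)` is decided by `∫_{-∞}^0 F ^ (1 + s)` alone.
-/

open MeasureTheory Set

section Tails

variable {Ω : Type*} [MeasurableSpace Ω] {μ : Measure Ω} {X : Ω → ℝ}

theorem lintegral_Ioi_measure_le_lt_top (hX : Integrable X μ) :
    ∫⁻ t in Ioi 0, μ {ω | t ≤ X ω} < ⊤ := by
  have hpos := hX.pos_part.lintegral_lt_top
  rw [lintegral_eq_lintegral_meas_le μ (f := fun ω ↦ max (X ω) 0)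
    (.of_forall fun _ ↦ le_max_right _ _) hX.pos_part.aemeasurable] at hpos
  refine lt_of_eq_of_lt (setLIntegral_congr_fun measurableSet_Ioi fun t (ht : 0 < t) ↦ ?_) hpos
  congr 1
  ext ω
  simp [ht.not_ge]

theorem lintegral_Iic_measure_le_lt_top (hX : Integrable X μ) :
    ∫⁻ x in Iic 0, μ {ω | X ω ≤ x} < ⊤ := by
  have h_neg := (Measure.measurePreserving_neg volume).setLIntegral_comp_preimage_emb
    measurableEmbedding_neg (fun x ↦ μ {ω | X ω ≤ x}) (Iio (0 : ℝ))
  rw [← setLIntegral_congr Iio_ae_eq_Iic, ← h_neg]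
  simpa [le_neg] using lintegral_Ioi_measure_le_lt_top hX.neg

theorem lintegral_Ioi_one_sub_measure_le_lt_top [IsProbabilityMeasure μ] (hX : Integrable X μ) :
    ∫⁻ x in Ioi 0, (1 - μ {ω | X ω ≤ x}) < ⊤ := by
  refine lt_of_le_of_lt (lintegral_mono fun x ↦ ?_) (lintegral_Ioi_measure_le_lt_top hX)
  calc 1 - μ {ω | X ω ≤ x} ≤ μ {ω | X ω ≤ x}ᶜ := by
        rw [tsub_le_iff_left, ← measure_univ (μ := μ), ← union_compl_self {ω | X ω ≤ x}]
        exact measure_union_le _ _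
    _ ≤ μ {ω | x ≤ X ω} := measure_mono fun ω (hω : ¬X ω ≤ x) ↦ le_of_not_ge hω

end Tails

theorem lintegral_lt_top_iff_of_le_of_le_add {α : Type*} [MeasurableSpace α] {μ : Measure α}
    {f g h : α → ENNReal} (hh : AEMeasurable h μ) (hh_lt : ∫⁻ a, h a ∂μ < ⊤)
    (hfg : f ≤ g) (hgf : g ≤ f + h) : ∫⁻ a, f a ∂μ < ⊤ ↔ ∫⁻ a, g a ∂μ < ⊤ :=
  ⟨fun hf ↦ (lintegral_mono hgf).trans_lt <| by
      rw [Pi.add_def, lintegral_add_right' f hh]; exact ENNReal.add_lt_top.2 ⟨hf, hh_lt⟩,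
    fun hg ↦ (lintegral_mono hfg).trans_lt hg⟩

theorem ENNReal.mul_lt_top_iff_right {a b : ENNReal} (ha₀ : a ≠ 0) (ha : a ≠ ⊤) :
    a * b < ⊤ ↔ b < ⊤ :=
  ⟨(ENNReal.lt_top_of_mul_ne_top_right ·.ne ha₀), ENNReal.mul_lt_top ha.lt_top⟩

theorem Real.mul_one_sub_rpow {u : ℝ} (hu : 0 ≤ u) {s : ℝ} (hs : 1 + s ≠ 0) :
    u * (1 - u ^ s) = u - u ^ (1 + s) := by
  rw [Real.rpow_add' hu hs, Real.rpow_one]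
  ring

theorem lintegral_tsallis_lt_top_iff {F : ℝ → ℝ} (hFm : Measurable F) (hF₀ : ∀ x, 0 ≤ F x)
    (hF₁ : ∀ x, F x ≤ 1) (h_left : ∫⁻ x in Iic 0, ENNReal.ofReal (F x) < ⊤)
    (h_right : ∫⁻ x in Ioi 0, ENNReal.ofReal (1 - F x) < ⊤) {s : ℝ} (hs : s ∈ Ioo (-1 : ℝ) 0) :
    ∫⁻ x, ENNReal.ofReal ((1 / s) * (F x * (1 - F x ^ s))) < ⊤ ↔
      ∫⁻ x in Iic 0, ENNReal.ofReal (F x ^ (1 + s)) < ⊤ := by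
  obtain ⟨hs₁, hs₀⟩ := hs
  have h_integrand : (fun x ↦ ENNReal.ofReal ((1 / s) * (F x * (1 - F x ^ s)))) =
      fun x ↦ ENNReal.ofReal (-s⁻¹) * ENNReal.ofReal (F x ^ (1 + s) - F x) := by
    ext x
    rw [← ENNReal.ofReal_mul (by simpa using hs₀.le),
      Real.mul_one_sub_rpow (hF₀ x) (by linarith)]
    ring_nf
  have h_right' : ∫⁻ x in Ioi 0, ENNReal.ofReal (F x ^ (1 + s) - F x) < ⊤ := by
    refine lt_of_le_of_lt (lintegral_mono fun x ↦ ENNReal.ofReal_le_ofReal ?_) h_right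
    linarith [Real.rpow_le_one (hF₀ x) (hF₁ x) (by linarith : 0 ≤ 1 + s)]
  rw [h_integrand, lintegral_const_mul' _ _ ENNReal.ofReal_ne_top,
    ENNReal.mul_lt_top_iff_right (by simpa using hs₀) ENNReal.ofReal_ne_top,
    ← lintegral_add_compl _ measurableSet_Iic, compl_Iic, ENNReal.add_lt_top,
    and_iff_left h_right']
  refine lintegral_lt_top_iff_of_le_of_le_add hFm.ennreal_ofReal.aemeasurable h_left
    (fun x ↦ ENNReal.ofReal_le_ofReal (by linarith [hF₀ x])) fun x ↦ ?_
  simpa using ENNReal.ofReal_add_le (p := F x ^ (1 + s) - F x) (q := F x)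

theorem cumulative_tsallis_entropy_finite_iff_general
    {Ω : Type*} [MeasureSpace Ω] [IsProbabilityMeasure (volume : Measure Ω)]
    (X : Ω → ℝ) (hXint : Integrable X)
    (F : ℝ → ℝ) (hF : ∀ x, F x = ((volume : Measure Ω) {ω | X ω ≤ x}).toReal)
    (s : ℝ) (hs : s ∈ Ioo (-1 : ℝ) 0) :
    (∫⁻ x : ℝ, ENNReal.ofReal ((1 / s) * (F x * (1 - F x ^ s)))) < ⊤
      ↔ (∫⁻ x in Iic (0 : ℝ), ENNReal.ofReal (F x ^ (1 + s))) < ⊤ := by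
  have hF_ofReal (x : ℝ) : ENNReal.ofReal (F x) = volume {ω | X ω ≤ x} := by
    rw [hF, ENNReal.ofReal_toReal (measure_ne_top _ _)]
  have hF₀ (x : ℝ) : 0 ≤ F x := hF x ▸ ENNReal.toReal_nonneg
  have hF_mono : Monotone F := fun x y hxy ↦ by
    simp only [hF]
    exact ENNReal.toReal_mono (measure_ne_top _ _) (measure_mono fun ω (h : X ω ≤ x) ↦ h.trans hxy)
  refine lintegral_tsallis_lt_top_iff hF_mono.measurable hF₀
    (fun x ↦ hF x ▸ ENNReal.toReal_le_of_le_ofReal zero_le_one (by simpa using prob_le_one))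
    (by simpa only [hF_ofReal] using lintegral_Iic_measure_le_lt_top hXint) ?_ hs
  simpa only [ENNReal.ofReal_sub _ (hF₀ _), ENNReal.ofReal_one, hF_ofReal]
    using lintegral_Ioi_one_sub_measure_le_lt_top hXint

/-- For an integrable real random variable `X` with continuous cdf `F` and
`s ∈ (−1,0)`, the cumulative Tsallis entropy `Δ_s(X) = (1/s) ∫_ℝ F(x)(1 − F(x)^s) dx` is
finite if and only if `∫_{−∞}^0 F(x)^{1+s} dx < ∞`. -/
theorem cumulative_tsallis_entropy_finite_iff
    {Ω : Type*} [MeasureSpace Ω] [IsProbabilityMeasure (volume : Measure Ω)]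
    (X : Ω → ℝ) (hXm : Measurable X) (hXint : Integrable X)
    (F : ℝ → ℝ) (hF : ∀ x, F x = ((volume : Measure Ω) {ω | X ω ≤ x}).toReal)
    (hFcont : Continuous F)
    (s : ℝ) (hs : s ∈ Ioo (-1 : ℝ) 0) :
    (∫⁻ x : ℝ, ENNReal.ofReal ((1 / s) * (F x * (1 - F x ^ s)))) < ⊤
      ↔ (∫⁻ x in Iic (0 : ℝ), ENNReal.ofReal (F x ^ (1 + s))) < ⊤ :=
  cumulative_tsallis_entropy_finite_iff_general X hXint F hF s hs
end

section
/- Let X be a real random variable with finite expectation whose cumulative distribution function F is continuous, let s ∈ (−1,0) and set p = 1/(1+s) ∈ (1,∞). If E[(X_−)^q] < ∞ for some q > p, where X_− = max(−X,0), then Δ_s(X) < ∞; and if Δ_s(X) < ∞, then E[(X_−)^p] < ∞. -/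
/-!
Write `G t = P(X ≤ -t) = F (-t)` and `p = 1 / (1 + s)`. The integrand `F (1 - F ^ s) / s` is at
most `F ^ (1 + s) / (-s)`, at least `F ^ (1 + s) / (-2 s)` once `F` is small, and at most
`(1 - F) / (-s)`, whose integral over the positive half-line is `E[X₊] < ∞`. Hence `Δ_s(X) < ∞`
exactly when `∫₀^∞ G(t) ^ (1/p) dt < ∞`, i.e. when `X₋` lies in the Lorentz space `L^{p,1}`, and
the theorem is the pair of embeddings `L^q ⊆ L^{p,1} ⊆ L^p` for `q > p`. The first follows from
Markov's inequality `G t ≤ E[X₋^q] t^(-q)`. For the second, `G ^ (1/p)` is antitone, so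
`t G(t) ^ (1/p) ≤ A := ∫₀^∞ G ^ (1/p)`, whence `t ^ (p-1) G(t) ≤ A ^ (p-1) G(t) ^ (1/p)` in the
layer-cake formula `E[X₋^p] = p ∫₀^∞ t ^ (p-1) G(t) dt`.
-/

open MeasureTheory Set Filter Topology ProbabilityTheory ENNReal

noncomputable def tsallisIntegrand (s u : ℝ) : ℝ := 1 / s * (u * (1 - u ^ s))

section TsallisIntegrand

variable {s u : ℝ}

lemma tsallisIntegrand_eq (hs : s ∈ Ioo (-1 : ℝ) 0) (hu : 0 ≤ u) :
    tsallisIntegrand s u = (-s)⁻¹ * (u ^ (1 + s) - u) := by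
  have hs0 : s ≠ 0 := hs.2.ne
  rw [tsallisIntegrand, Real.rpow_add' hu (by linarith [hs.1]), Real.rpow_one]
  field_simp
  ring

lemma tsallisIntegrand_le_rpow (hs : s ∈ Ioo (-1 : ℝ) 0) (hu : 0 ≤ u) :
    tsallisIntegrand s u ≤ (-s)⁻¹ * u ^ (1 + s) := by
  rw [tsallisIntegrand_eq hs hu]
  exact mul_le_mul_of_nonneg_left (by linarith) (inv_nonneg.2 (by linarith [hs.2]))

lemma tsallisIntegrand_le_one_sub (hs : s ∈ Ioo (-1 : ℝ) 0) (hu0 : 0 ≤ u) (hu1 : u ≤ 1) :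
    tsallisIntegrand s u ≤ (-s)⁻¹ * (1 - u) := by
  rw [tsallisIntegrand_eq hs hu0]
  have : u ^ (1 + s) ≤ 1 := Real.rpow_le_one hu0 hu1 (by linarith [hs.1])
  exact mul_le_mul_of_nonneg_left (by linarith) (inv_nonneg.2 (by linarith [hs.2]))

lemma rpow_le_tsallisIntegrand (hs : s ∈ Ioo (-1 : ℝ) 0) (hu0 : 0 ≤ u) (hu : u ^ (-s) ≤ 1 / 2) :
    u ^ (1 + s) ≤ -(2 * s) * tsallisIntegrand s u := by
  have hsplit : u = u ^ (1 + s) * u ^ (-s) := by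
    rw [← Real.rpow_add' hu0 (by norm_num), add_neg_cancel_right, Real.rpow_one]
  have hle : u ≤ u ^ (1 + s) / 2 := by
    nth_rewrite 1 [hsplit]
    nlinarith [Real.rpow_nonneg hu0 (1 + s)]
  rw [tsallisIntegrand_eq hs hu0, ← mul_assoc, show -(2 * s) * (-s)⁻¹ = 2 by field_simp [hs.2.ne]]
  linarith

end TsallisIntegrand

section TsallisLIntegral

variable {F : ℝ → ℝ} {s : ℝ}

lemma lintegral_tsallisIntegrand_le (hs : s ∈ Ioo (-1 : ℝ) 0) (hF0 : ∀ x, 0 ≤ F x)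
    (hF1 : ∀ x, F x ≤ 1) :
    ∫⁻ x, ENNReal.ofReal (tsallisIntegrand s (F x)) ≤
      ENNReal.ofReal (-s)⁻¹ * ((∫⁻ x in Iic 0, ENNReal.ofReal (F x ^ (1 + s))) +
        ∫⁻ x in Ioi 0, ENNReal.ofReal (1 - F x)) := by
  have hc : 0 ≤ (-s)⁻¹ := inv_nonneg.2 (by linarith [hs.2])
  rw [← lintegral_add_compl _ (measurableSet_Iic (a := 0)), compl_Iic, mul_add,
    ← lintegral_const_mul' _ _ ofReal_ne_top, ← lintegral_const_mul' _ _ ofReal_ne_top]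
  gcongr with x x
  · rw [← ENNReal.ofReal_mul hc]
    exact ENNReal.ofReal_le_ofReal (tsallisIntegrand_le_rpow hs (hF0 x))
  · rw [← ENNReal.ofReal_mul hc]
    exact ENNReal.ofReal_le_ofReal (tsallisIntegrand_le_one_sub hs (hF0 x) (hF1 x))

lemma setLIntegral_Iic_rpow_le_lintegral_tsallisIntegrand (hs : s ∈ Ioo (-1 : ℝ) 0)
    (hF0 : ∀ x, 0 ≤ F x) {x₀ : ℝ} (hx₀ : ∀ x ≤ x₀, F x ^ (-s) ≤ 1 / 2) :
    ∫⁻ x in Iic x₀, ENNReal.ofReal (F x ^ (1 + s)) ≤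
      ENNReal.ofReal (-(2 * s)) * ∫⁻ x, ENNReal.ofReal (tsallisIntegrand s (F x)) := by
  calc ∫⁻ x in Iic x₀, ENNReal.ofReal (F x ^ (1 + s))
      ≤ ∫⁻ x in Iic x₀, ENNReal.ofReal (-(2 * s)) * ENNReal.ofReal (tsallisIntegrand s (F x)) := by
        refine setLIntegral_mono' measurableSet_Iic fun x hx => ?_
        rw [← ENNReal.ofReal_mul (by linarith [hs.2])]
        exact ENNReal.ofReal_le_ofReal (rpow_le_tsallisIntegrand hs (hF0 x) (hx₀ x hx))
    _ ≤ ENNReal.ofReal (-(2 * s)) * ∫⁻ x, ENNReal.ofReal (tsallisIntegrand s (F x)) := by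
        rw [lintegral_const_mul' _ _ ofReal_ne_top]
        gcongr
        exact Measure.restrict_le_self

lemma setLIntegral_Iic_rpow_lt_top_of_lintegral_tsallisIntegrand_lt_top
    (hs : s ∈ Ioo (-1 : ℝ) 0) (hF0 : ∀ x, 0 ≤ F x) (hF1 : ∀ x, F x ≤ 1) (hF : Tendsto F atBot (𝓝 0))
    (hΔ : ∫⁻ x, ENNReal.ofReal (tsallisIntegrand s (F x)) < ⊤) :
    ∫⁻ x in Iic 0, ENNReal.ofReal (F x ^ (1 + s)) < ⊤ := by
  have hFs : Tendsto (fun x => F x ^ (-s)) atBot (𝓝 0) := by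
    simpa [Real.zero_rpow (neg_ne_zero.2 hs.2.ne)] using
      hF.rpow_const (Or.inr (neg_nonneg.2 hs.2.le))
  obtain ⟨x₀, hx₀⟩ :=
    eventually_atBot.1 (hFs.eventually (ge_mem_nhds (by norm_num : (0 : ℝ) < 1 / 2)))
  have hbounded : ∫⁻ x in Icc x₀ 0, ENNReal.ofReal (F x ^ (1 + s)) < ⊤ := by
    calc ∫⁻ x in Icc x₀ 0, ENNReal.ofReal (F x ^ (1 + s))
        ≤ ∫⁻ x in Icc x₀ 0, 1 := setLIntegral_mono' measurableSet_Icc fun x _ =>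
          ofReal_le_one.2 (Real.rpow_le_one (hF0 x) (hF1 x) (by linarith [hs.1]))
      _ < ⊤ := by simp [Real.volume_Icc]
  calc ∫⁻ x in Iic 0, ENNReal.ofReal (F x ^ (1 + s))
      ≤ ∫⁻ x in Icc x₀ 0 ∪ Iic x₀, ENNReal.ofReal (F x ^ (1 + s)) :=
        lintegral_mono_set fun x hx => by
          rcases le_total x₀ x with h | h
          exacts [Or.inl ⟨h, hx⟩, Or.inr h]
    _ ≤ _ := lintegral_union_le _ _ _
    _ < ⊤ := add_lt_top.2 ⟨hbounded, (setLIntegral_Iic_rpow_le_lintegral_tsallisIntegrand hs hF0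
        hx₀).trans_lt (mul_lt_top ofReal_lt_top hΔ)⟩

end TsallisLIntegral

section Distribution

variable {Ω : Type*} [MeasurableSpace Ω] {μ : Measure Ω} {f : Ω → ℝ}

lemma meas_ge_le_lintegral_rpow_div (hf : AEMeasurable f μ) {q t : ℝ} (hq : 0 ≤ q) (ht : 0 < t) :
    μ {ω | t ≤ f ω} ≤ (∫⁻ ω, ENNReal.ofReal (f ω ^ q) ∂μ) / ENNReal.ofReal (t ^ q) := by
  refine le_trans (measure_mono fun ω (hω : t ≤ f ω) => ?_)
    (meas_ge_le_lintegral_div (hf.pow_const q).ennreal_ofReal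
      (by simpa using Real.rpow_pos_of_pos ht q) ofReal_ne_top)
  exact ENNReal.ofReal_le_ofReal (Real.rpow_le_rpow ht.le hω hq)

lemma setLIntegral_Ioi_meas_ge_rpow_lt_top [IsFiniteMeasure μ] (hf : AEMeasurable f μ)
    {a q : ℝ} (ha : 0 < a) (hqa : 1 < q * a) (hfq : ∫⁻ ω, ENNReal.ofReal (f ω ^ q) ∂μ < ⊤) :
    ∫⁻ t in Ioi 0, μ {ω | t ≤ f ω} ^ a < ⊤ := by
  set C := ∫⁻ ω, ENNReal.ofReal (f ω ^ q) ∂μ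
  have hq : 0 ≤ q := by nlinarith
  have hnear : ∫⁻ t in Ioc 0 1, μ {ω | t ≤ f ω} ^ a < ⊤ := by
    calc ∫⁻ t in Ioc 0 1, μ {ω | t ≤ f ω} ^ a
        ≤ ∫⁻ t in Ioc 0 1, μ univ ^ a :=
          lintegral_mono fun t => rpow_le_rpow (measure_mono (subset_univ _)) ha.le
      _ < ⊤ := by
          rw [setLIntegral_const, Real.volume_Ioc]
          exact mul_lt_top (rpow_lt_top_of_nonneg ha.le (measure_ne_top μ univ)) ofReal_lt_top
  have hfar : ∫⁻ t in Ioi 1, μ {ω | t ≤ f ω} ^ a < ⊤ := by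
    calc ∫⁻ t in Ioi 1, μ {ω | t ≤ f ω} ^ a
        ≤ ∫⁻ t in Ioi 1, C ^ a * ENNReal.ofReal (t ^ (-(q * a))) := by
          refine setLIntegral_mono' measurableSet_Ioi fun t (ht : 1 < t) => ?_
          have ht0 : 0 < t := one_pos.trans ht
          calc μ {ω | t ≤ f ω} ^ a ≤ (C / ENNReal.ofReal (t ^ q)) ^ a :=
                rpow_le_rpow (meas_ge_le_lintegral_rpow_div hf hq ht0) ha.le
            _ = C ^ a * ENNReal.ofReal (t ^ (-(q * a))) := by
                rw [div_rpow_of_nonneg _ _ ha.le, ofReal_rpow_of_nonneg (by positivity) ha.le,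
                  ← Real.rpow_mul ht0.le, Real.rpow_neg ht0.le,
                  ofReal_inv_of_pos (by positivity), div_eq_mul_inv]
      _ = C ^ a * ∫⁻ t in Ioi 1, ENNReal.ofReal (t ^ (-(q * a))) :=
          lintegral_const_mul' _ _ (rpow_lt_top_of_nonneg ha.le hfq.ne).ne
      _ < ⊤ := mul_lt_top (rpow_lt_top_of_nonneg ha.le hfq.ne)
          (integrableOn_Ioi_rpow_of_lt (by linarith) one_pos).setLIntegral_lt_top
  calc ∫⁻ t in Ioi 0, μ {ω | t ≤ f ω} ^ a
      ≤ ∫⁻ t in Ioc 0 1 ∪ Ioi 1, μ {ω | t ≤ f ω} ^ a :=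
        lintegral_mono_set (Ioc_union_Ioi_eq_Ioi zero_le_one).ge
    _ ≤ _ := lintegral_union_le _ _ _
    _ < ⊤ := add_lt_top.2 ⟨hnear, hfar⟩

lemma Antitone.ofReal_mul_le_setLIntegral_Ioi {G : ℝ → ℝ≥0∞} (hG : Antitone G) (t : ℝ) :
    ENNReal.ofReal t * G t ≤ ∫⁻ u in Ioi 0, G u := by
  calc ENNReal.ofReal t * G t = ∫⁻ _ in Ioc 0 t, G t := by
        rw [setLIntegral_const, Real.volume_Ioc, sub_zero, mul_comm]
    _ ≤ ∫⁻ u in Ioc 0 t, G u := setLIntegral_mono' measurableSet_Ioc fun u hu => hG hu.2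
    _ ≤ ∫⁻ u in Ioi 0, G u := lintegral_mono_set Ioc_subset_Ioi_self

lemma lintegral_rpow_le_setLIntegral_Ioi_meas_ge_rpow_inv (hf0 : 0 ≤ᵐ[μ] f)
    (hf : AEMeasurable f μ) {p : ℝ} (hp : 1 ≤ p) :
    ∫⁻ ω, ENNReal.ofReal (f ω ^ p) ∂μ ≤
      ENNReal.ofReal p * (∫⁻ t in Ioi 0, μ {ω | t ≤ f ω} ^ p⁻¹) ^ p := by
  set A := ∫⁻ t in Ioi 0, μ {ω | t ≤ f ω} ^ p⁻¹
  have hp0 : 0 < p := by linarith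
  have hp1 : 0 ≤ p - 1 := by linarith
  have hanti : Antitone fun t => μ {ω | t ≤ f ω} ^ p⁻¹ := fun a b hab =>
    rpow_le_rpow (measure_mono fun ω (h : b ≤ f ω) => hab.trans h) (inv_nonneg.2 hp0.le)
  have hpoint : ∀ t ∈ Ioi (0 : ℝ), μ {ω | t ≤ f ω} * ENNReal.ofReal (t ^ (p - 1)) ≤
      A ^ (p - 1) * μ {ω | t ≤ f ω} ^ p⁻¹ := by
    intro t (ht : 0 < t)
    set G := μ {ω | t ≤ f ω}
    have hsplit : G = G ^ p⁻¹ * (G ^ p⁻¹) ^ (p - 1) := by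
      rw [← rpow_mul, ← rpow_add_of_nonneg _ _ (inv_nonneg.2 hp0.le)
        (mul_nonneg (inv_nonneg.2 hp0.le) hp1), show p⁻¹ + p⁻¹ * (p - 1) = 1 by field_simp; ring,
        rpow_one]
    calc G * ENNReal.ofReal (t ^ (p - 1)) = G ^ p⁻¹ * (ENNReal.ofReal t * G ^ p⁻¹) ^ (p - 1) := by
          rw [mul_rpow_of_nonneg _ _ hp1, ← ofReal_rpow_of_nonneg ht.le hp1]
          nth_rewrite 1 [hsplit]
          ring
      _ ≤ G ^ p⁻¹ * A ^ (p - 1) := by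
          gcongr
          exact hanti.ofReal_mul_le_setLIntegral_Ioi t
      _ = A ^ (p - 1) * G ^ p⁻¹ := mul_comm _ _
  calc ∫⁻ ω, ENNReal.ofReal (f ω ^ p) ∂μ
      = ENNReal.ofReal p * ∫⁻ t in Ioi 0, μ {ω | t ≤ f ω} * ENNReal.ofReal (t ^ (p - 1)) :=
        lintegral_rpow_eq_lintegral_meas_le_mul μ hf0 hf hp0
    _ ≤ ENNReal.ofReal p * ∫⁻ t in Ioi 0, A ^ (p - 1) * μ {ω | t ≤ f ω} ^ p⁻¹ :=
        mul_le_mul_right (setLIntegral_mono' measurableSet_Ioi hpoint) _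
    _ = ENNReal.ofReal p * A ^ p := by
        rw [lintegral_const_mul _ hanti.measurable, ← rpow_one (∫⁻ t in Ioi 0, _),
          ← rpow_add_of_nonneg _ _ hp1 zero_le_one, sub_add_cancel]

end Distribution

section RandomVariable

variable {Ω : Type*} [MeasurableSpace Ω] {μ : Measure Ω} {X : Ω → ℝ} {F : ℝ → ℝ}

lemma eq_cdf_map [IsProbabilityMeasure μ] (hX : AEMeasurable X μ)
    (hF : ∀ x, F x = (μ {ω | X ω ≤ x}).toReal) :
    F = cdf (μ.map X) := by
  have := Measure.isProbabilityMeasure_map hX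
  ext x
  rw [hF, cdf_eq_real, measureReal_def, Measure.map_apply_of_aemeasurable hX measurableSet_Iic]
  rfl

lemma setLIntegral_Ioi_meas_ge_negPart_rpow [IsFiniteMeasure μ]
    (hF : ∀ x, F x = (μ {ω | X ω ≤ x}).toReal) {a : ℝ} (ha : 0 ≤ a) :
    ∫⁻ t in Ioi 0, μ {ω | t ≤ max (-X ω) 0} ^ a = ∫⁻ x in Iic 0, ENNReal.ofReal (F x ^ a) := by
  have hneg : ∀ t ∈ Ioi (0 : ℝ), μ {ω | t ≤ max (-X ω) 0} ^ a = ENNReal.ofReal (F (-t) ^ a) := by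
    intro t (ht : 0 < t)
    have hset : {ω | t ≤ max (-X ω) 0} = {ω | X ω ≤ -t} := by
      ext ω
      simp only [mem_ofPred_eq, le_max_iff, not_le.2 ht, or_false]
      constructor <;> intro h <;> linarith
    rw [hset, hF, ← ofReal_rpow_of_nonneg toReal_nonneg ha, ofReal_toReal (measure_ne_top _ _)]
  calc ∫⁻ t in Ioi 0, μ {ω | t ≤ max (-X ω) 0} ^ a
      = ∫⁻ t in Ioi 0, ENNReal.ofReal (F (-t) ^ a) := setLIntegral_congr_fun measurableSet_Ioi hneg
    _ = ∫⁻ x in Iio 0, ENNReal.ofReal (F x ^ a) := by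
        rw [← (Measure.measurePreserving_neg volume).setLIntegral_comp_preimage_emb
          measurableEmbedding_neg]
        simp
    _ = ∫⁻ x in Iic 0, ENNReal.ofReal (F x ^ a) := setLIntegral_congr Iio_ae_eq_Iic

lemma setLIntegral_Ioi_one_sub_eq_lintegral [IsProbabilityMeasure μ] (hX : AEMeasurable X μ)
    (hF : ∀ x, F x = (μ {ω | X ω ≤ x}).toReal) :
    ∫⁻ x in Ioi 0, ENNReal.ofReal (1 - F x) = ∫⁻ ω, ENNReal.ofReal (X ω) ∂μ := by
  have hpos : ∀ t ∈ Ioi (0 : ℝ), ENNReal.ofReal (1 - F t) = μ {ω | t < max (X ω) 0} := by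
    intro t (ht : 0 < t)
    have hset : {ω | t < max (X ω) 0} = {ω | X ω ≤ t}ᶜ := by
      ext ω
      simp [ht.not_gt]
    rw [hset, prob_compl_eq_one_sub₀ (s := {ω | X ω ≤ t}) (hX.nullMeasurable measurableSet_Iic), hF,
      ofReal_sub _ toReal_nonneg, ofReal_one, ofReal_toReal (measure_ne_top _ _)]
  rw [setLIntegral_congr_fun measurableSet_Ioi hpos, ← lintegral_eq_lintegral_meas_lt μ
    (f := fun ω => max (X ω) 0) (ae_of_all _ fun ω => le_max_right _ _) (hX.max aemeasurable_const)]
  simp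

end RandomVariable

theorem cumulative_tsallis_entropy_Lp_general
    {Ω : Type*} [MeasureSpace Ω] [IsProbabilityMeasure (volume : Measure Ω)]
    (X : Ω → ℝ) (hXint : Integrable X)
    (F : ℝ → ℝ) (hF : ∀ x, F x = ((volume : Measure Ω) {ω | X ω ≤ x}).toReal)
    (s : ℝ) (hs : s ∈ Ioo (-1 : ℝ) 0) :
    ((∃ q : ℝ, 1 / (1 + s) < q ∧
        (∫⁻ ω, ENNReal.ofReal (max (-X ω) 0 ^ q) ∂(volume : Measure Ω)) < ⊤) →
      (∫⁻ x : ℝ, ENNReal.ofReal ((1 / s) * (F x * (1 - F x ^ s)))) < ⊤)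
    ∧ ((∫⁻ x : ℝ, ENNReal.ofReal ((1 / s) * (F x * (1 - F x ^ s)))) < ⊤ →
        (∫⁻ ω, ENNReal.ofReal (max (-X ω) 0 ^ (1 / (1 + s))) ∂(volume : Measure Ω)) < ⊤) := by
  have hX := hXint.aemeasurable
  have hXneg : AEMeasurable (fun ω => max (-X ω) 0) := hX.neg.max aemeasurable_const
  have hFcdf := eq_cdf_map hX hF
  have hF0 : ∀ x, 0 ≤ F x := hFcdf ▸ cdf_nonneg _
  have hF1 : ∀ x, F x ≤ 1 := hFcdf ▸ cdf_le_one _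
  have hs1 : 0 < 1 + s := by linarith [hs.1]
  have hleft := setLIntegral_Ioi_meas_ge_negPart_rpow hF hs1.le
  change ((∃ q, _ ∧ _) → ∫⁻ x, ENNReal.ofReal (tsallisIntegrand s (F x)) < ⊤) ∧
    (∫⁻ x, ENNReal.ofReal (tsallisIntegrand s (F x)) < ⊤ → _)
  constructor
  · rintro ⟨q, hq, hXq⟩
    have hqa : 1 < q * (1 + s) := by rwa [one_div, inv_lt_iff_one_lt_mul₀ hs1] at hq
    refine (lintegral_tsallisIntegrand_le hs hF0 hF1).trans_lt (mul_lt_top ofReal_lt_top ?_)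
    rw [← hleft, setLIntegral_Ioi_one_sub_eq_lintegral hX hF]
    exact add_lt_top.2 ⟨setLIntegral_Ioi_meas_ge_rpow_lt_top hXneg hs1 hqa hXq,
      hXint.lintegral_lt_top⟩
  · intro hΔ
    have hp : 1 ≤ 1 / (1 + s) := by rw [le_div_iff₀ hs1]; linarith [hs.2]
    refine (lintegral_rpow_le_setLIntegral_Ioi_meas_ge_rpow_inv (f := fun ω => max (-X ω) 0)
      (ae_of_all _ fun ω => le_max_right _ _) hXneg hp).trans_lt (mul_lt_top ofReal_lt_top ?_)
    rw [one_div, inv_inv, hleft]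
    exact rpow_lt_top_of_nonneg (by positivity)
      (setLIntegral_Iic_rpow_lt_top_of_lintegral_tsallisIntegrand_lt_top hs hF0 hF1
        (hFcdf ▸ tendsto_cdf_atBot _) hΔ).ne

/-- Let `X` be an integrable real random variable with continuous cdf `F`,
`s ∈ (−1,0)` and `p = 1/(1+s)`. If `E[(X_−)^q] < ∞` for some `q > p` then `Δ_s(X) < ∞`;
and if `Δ_s(X) < ∞` then `E[(X_−)^p] < ∞`. -/
theorem cumulative_tsallis_entropy_Lp
    {Ω : Type*} [MeasureSpace Ω] [IsProbabilityMeasure (volume : Measure Ω)]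
    (X : Ω → ℝ) (hXm : Measurable X) (hXint : Integrable X)
    (F : ℝ → ℝ) (hF : ∀ x, F x = ((volume : Measure Ω) {ω | X ω ≤ x}).toReal)
    (hFcont : Continuous F)
    (s : ℝ) (hs : s ∈ Ioo (-1 : ℝ) 0) :
    ((∃ q : ℝ, 1 / (1 + s) < q ∧
        (∫⁻ ω, ENNReal.ofReal (max (-X ω) 0 ^ q) ∂(volume : Measure Ω)) < ⊤) →
      (∫⁻ x : ℝ, ENNReal.ofReal ((1 / s) * (F x * (1 - F x ^ s)))) < ⊤)
    ∧ ((∫⁻ x : ℝ, ENNReal.ofReal ((1 / s) * (F x * (1 - F x ^ s)))) < ⊤ →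
        (∫⁻ ω, ENNReal.ofReal (max (-X ω) 0 ^ (1 / (1 + s))) ∂(volume : Measure Ω)) < ⊤) :=
  cumulative_tsallis_entropy_Lp_general X hXint F hF s hs
end

section
/- For every s > −1, the closure in ℝ of the set { Δ_s(X)/E[X] : X an integrable real random variable with X > 0 almost surely and E[X] > 0 } equals the interval [0, 1], where Δ_s(X) = (1/s) ∫_0^∞ F_X(x)(1 − F_X(x)^s) dx (and Δ_0(X) = −∫_0^∞ F_X log F_X dx). In particular 0 ≤ Δ_s(X) ≤ E[X] for every such X. -/
/-!
For `t ∈ [0, 1]` and `s > -1` one has `0 ≤ tsallisFn s t ≤ 1 - t` (Bernoulli's inequality for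
`t ^ (1 + s)`, resp. `-t log t ≤ 1 - t`); integrating this against the layer-cake formula
`E[X] = ∫₀^∞ (1 - F_X)` gives `0 ≤ Δ_s(X) ≤ E[X]`.

Conversely, if `X` takes the value `1` with probability `1 - p` and `b ≥ 1` with probability `p`,
then `Δ_s(X) = (b - 1) φ(1 - p)` with `φ = tsallisFn s`, and `E[X] = 1 - p + p b`. As `b` runs
over `[1, ∞)` the ratio runs from `0` up to `φ(1 - p) / p`, which tends to `-φ'(1) = 1` as
`p → 0⁺`; so every ratio in `[0, 1)` is attained.
-/

open MeasureTheory Set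

/-- The integrand `t ↦ (1/s) t (1 − t^s)` of the cumulative Tsallis entropy, with the
convention `(1 − t^0)/0 = −log t` at `s = 0`. -/
noncomputable def tsallisFn (s t : ℝ) : ℝ :=
  if s = 0 then -(t * Real.log t) else (1 / s) * (t * (1 - t ^ s))

open Filter Topology Real

lemma tsallisFn_zero_left : tsallisFn 0 = negMulLog := by
  ext t; simp [tsallisFn, negMulLog]

lemma tsallisFn_of_ne_zero {s t : ℝ} (hs : -1 < s) (h0 : s ≠ 0) (ht : 0 ≤ t) :
    tsallisFn s t = (t - t ^ (1 + s)) / s := by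
  rw [tsallisFn, if_neg h0, rpow_add' ht (by linarith), rpow_one]
  ring

lemma tsallisFn_zero_right (s : ℝ) : tsallisFn s 0 = 0 := by simp [tsallisFn]

lemma tsallisFn_one_right (s : ℝ) : tsallisFn s 1 = 0 := by simp [tsallisFn]

lemma tsallisFn_nonneg {s t : ℝ} (hs : -1 < s) (ht₀ : 0 ≤ t) (ht₁ : t ≤ 1) :
    0 ≤ tsallisFn s t := by
  rcases eq_or_ne s 0 with rfl | h0
  · exact tsallisFn_zero_left ▸ negMulLog_nonneg ht₀ ht₁
  rcases ht₀.eq_or_lt with rfl | ht₀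
  · rw [tsallisFn_zero_right]
  rw [tsallisFn_of_ne_zero hs h0 ht₀.le]
  rcases h0.lt_or_gt with hneg | hpos
  · have : t ≤ t ^ (1 + s) := by
      simpa using rpow_le_rpow_of_exponent_ge ht₀ ht₁ (by linarith : 1 + s ≤ 1)
    exact div_nonneg_of_nonpos (by linarith) hneg.le
  · have : t ^ (1 + s) ≤ t := by
      simpa using rpow_le_rpow_of_exponent_ge ht₀ ht₁ (by linarith : 1 ≤ 1 + s)
    exact div_nonneg (by linarith) hpos.le

lemma tsallisFn_le_one_sub {s t : ℝ} (hs : -1 < s) (ht₀ : 0 ≤ t) :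
    tsallisFn s t ≤ 1 - t := by
  rcases eq_or_ne s 0 with rfl | h0
  · exact tsallisFn_zero_left ▸ negMulLog_le_one_sub_self ht₀
  have hx : -1 ≤ t - 1 := by linarith
  rw [tsallisFn_of_ne_zero hs h0 ht₀]
  rcases h0.lt_or_gt with hneg | hpos
  · have := rpow_one_add_le_one_add_mul_self hx (p := 1 + s) (by linarith) (by linarith)
    rw [add_sub_cancel] at this
    rw [div_le_iff_of_neg hneg]
    nlinarith
  · have := one_add_mul_self_le_rpow_one_add hx (p := 1 + s) (by linarith)
    rw [add_sub_cancel] at this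
    rw [div_le_iff₀ hpos]
    nlinarith

lemma hasDerivAt_tsallisFn_one (s : ℝ) : HasDerivAt (tsallisFn s) (-1) 1 := by
  rcases eq_or_ne s 0 with rfl | h0
  · simpa [tsallisFn_zero_left] using hasDerivAt_negMulLog one_ne_zero
  have hfun : tsallisFn s = fun t => (1 / s) * (t * (1 - t ^ s)) := by
    ext t; simp [tsallisFn, h0]
  rw [hfun]
  refine (((hasDerivAt_id' (1 : ℝ)).fun_mul
    ((hasDerivAt_rpow_const (Or.inl one_ne_zero)).const_sub 1)).const_mul (1 / s)).congr_deriv ?_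
  simp [h0]

lemma tendsto_tsallisFn_one_sub_div (s : ℝ) :
    Tendsto (fun p => tsallisFn s (1 - p) / p) (𝓝[>] 0) (𝓝 1) := by
  have := ((hasDerivAt_tsallisFn_one s).scomp_of_eq (0 : ℝ)
    ((hasDerivAt_id (0 : ℝ)).const_sub 1) (by simp)).tendsto_slope_zero_right
  simp only [Function.comp_apply, id_eq, sub_zero, tsallisFn_one_right, smul_eq_mul] at this
  refine (this.congr fun p => ?_).trans (by norm_num)
  simp [div_eq_inv_mul]

section LayerCake

variable {α : Type*} [MeasurableSpace α] {μ : Measure α} {f : α → ℝ}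

lemma MeasureTheory.Integrable.integrableOn_meas_lt (hf : Integrable f μ)
    (hf_nn : 0 ≤ᵐ[μ] f) :
    IntegrableOn (fun t => μ.real {a | t < f a}) (Ioi 0) := by
  refine integrable_toReal_of_lintegral_ne_top
    (Antitone.measurable (f := fun t => μ {a | t < f a})
      fun _ _ hst => measure_mono fun _ h => hst.trans_lt h).aemeasurable ?_
  rw [← lintegral_eq_lintegral_meas_lt μ hf_nn hf.aemeasurable]
  exact hf.lintegral_lt_top.ne

end LayerCake

lemma ae_nonneg_of_measure_Iic_zero {μ : Measure ℝ} (h0 : μ (Iic 0) = 0) : 0 ≤ᵐ[μ] id :=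
  measure_mono_null (fun x (hx : ¬ 0 ≤ x) => (not_le.1 hx).le) h0

section Cdf

variable {μ : Measure ℝ} [IsProbabilityMeasure μ]

lemma measureReal_Ioi_eq_one_sub (x : ℝ) : μ.real (Ioi x) = 1 - (μ (Iic x)).toReal := by
  rw [← compl_Iic, probReal_compl_eq_one_sub measurableSet_Iic, measureReal_def]

lemma integrableOn_one_sub_cdf (hi : Integrable id μ) (h0 : μ (Iic 0) = 0) :
    IntegrableOn (fun x => 1 - (μ (Iic x)).toReal) (Ioi 0) := by
  simp_rw [← measureReal_Ioi_eq_one_sub]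
  exact hi.integrableOn_meas_lt (ae_nonneg_of_measure_Iic_zero h0)

lemma integral_id_eq_setIntegral_one_sub_cdf (hi : Integrable id μ) (h0 : μ (Iic 0) = 0) :
    ∫ x, x ∂μ = ∫ x in Ioi 0, (1 - (μ (Iic x)).toReal) := by
  simp_rw [← measureReal_Ioi_eq_one_sub]
  exact hi.integral_eq_integral_meas_lt (ae_nonneg_of_measure_Iic_zero h0)

end Cdf

noncomputable def cumTsallis (s : ℝ) (μ : Measure ℝ) : ℝ :=
  ∫ x in Ioi 0, tsallisFn s (μ (Iic x)).toReal

lemma cumTsallis_nonneg {s : ℝ} (hs : -1 < s) (μ : Measure ℝ) [IsProbabilityMeasure μ] :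
    0 ≤ cumTsallis s μ :=
  setIntegral_nonneg measurableSet_Ioi fun _ _ =>
    tsallisFn_nonneg hs ENNReal.toReal_nonneg measureReal_le_one

lemma cumTsallis_le_integral {s : ℝ} (hs : -1 < s) (μ : Measure ℝ) [IsProbabilityMeasure μ]
    (hi : Integrable id μ) (h0 : μ (Iic 0) = 0) : cumTsallis s μ ≤ ∫ x, x ∂μ := by
  rw [integral_id_eq_setIntegral_one_sub_cdf hi h0]
  exact integral_mono_of_nonneg
    (ae_of_all _ fun _ => tsallisFn_nonneg hs ENNReal.toReal_nonneg measureReal_le_one)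
    (integrableOn_one_sub_cdf hi h0)
    (ae_of_all _ fun _ => tsallisFn_le_one_sub hs ENNReal.toReal_nonneg)

noncomputable def twoPoint (p b : ℝ) : Measure ℝ :=
  ENNReal.ofReal (1 - p) • Measure.dirac 1 + ENNReal.ofReal p • Measure.dirac b

section TwoPoint

variable {p : ℝ}

lemma isProbabilityMeasure_twoPoint (b : ℝ) (hp₀ : 0 ≤ p) (hp₁ : p ≤ 1) :
    IsProbabilityMeasure (twoPoint p b) := by
  constructor
  simp [twoPoint, ← ENNReal.ofReal_add (sub_nonneg.2 hp₁) hp₀]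

lemma integrable_id_twoPoint (p b : ℝ) : Integrable id (twoPoint p b) :=
  ((integrable_dirac (by simp)).smul_measure ENNReal.ofReal_ne_top).add_measure
    ((integrable_dirac (by simp)).smul_measure ENNReal.ofReal_ne_top)

lemma integral_id_twoPoint (b : ℝ) (hp₀ : 0 ≤ p) (hp₁ : p ≤ 1) :
    ∫ x, x ∂twoPoint p b = (1 - p) + p * b := by
  have hδ (a : ℝ) : Integrable (fun x => x) (Measure.dirac a) := integrable_dirac (by simp)
  rw [twoPoint, integral_add_measure ((hδ 1).smul_measure ENNReal.ofReal_ne_top)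
    ((hδ b).smul_measure ENNReal.ofReal_ne_top), integral_smul_measure, integral_smul_measure]
  simp [hp₀, hp₁]

lemma twoPoint_Iic_toReal (b : ℝ) (hp₀ : 0 ≤ p) (hp₁ : p ≤ 1) (x : ℝ) :
    (twoPoint p b (Iic x)).toReal = (if 1 ≤ x then 1 - p else 0) + if b ≤ x then p else 0 := by
  simp only [twoPoint, Measure.add_apply, Measure.smul_apply, smul_eq_mul,
    Measure.dirac_apply' _ measurableSet_Iic, indicator, mem_Iic]
  split_ifs <;> simp [ENNReal.toReal_add, hp₀, hp₁]

lemma tsallisFn_twoPoint_cdf (s : ℝ) {b : ℝ} (hp₀ : 0 ≤ p) (hp₁ : p ≤ 1) (hb : 1 ≤ b)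
    (x : ℝ) :
    tsallisFn s (twoPoint p b (Iic x)).toReal =
      (Ico 1 b).indicator (fun _ => tsallisFn s (1 - p)) x := by
  rw [twoPoint_Iic_toReal b hp₀ hp₁]
  rcases lt_or_ge x 1 with h1 | h1
  · simp [h1.not_ge, (h1.trans_le hb).not_ge, tsallisFn_zero_right]
  rcases lt_or_ge x b with h2 | h2
  · simp [h1, h2, h2.not_ge]
  · simp [h1, h2, tsallisFn_one_right]

lemma cumTsallis_twoPoint (s : ℝ) {b : ℝ} (hp₀ : 0 ≤ p) (hp₁ : p ≤ 1) (hb : 1 ≤ b) :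
    cumTsallis s (twoPoint p b) = (b - 1) * tsallisFn s (1 - p) := by
  rw [cumTsallis]
  simp_rw [tsallisFn_twoPoint_cdf s hp₀ hp₁ hb]
  rw [setIntegral_indicator measurableSet_Ico, inter_eq_self_of_subset_right
    fun x hx => mem_Ioi.2 (zero_lt_one.trans_le hx.1), setIntegral_const,
    volume_real_Ico_of_le hb, smul_eq_mul]

lemma twoPoint_Iic_zero {b : ℝ} (hb : 0 < b) : twoPoint p b (Iic 0) = 0 := by
  simp [twoPoint, Measure.dirac_apply' _ measurableSet_Iic, hb.not_ge]

end TwoPoint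

def tsallisRatios (s : ℝ) : Set ℝ :=
  {r | ∃ μ : Measure ℝ, IsProbabilityMeasure μ ∧ Integrable id μ ∧ μ (Iic 0) = 0 ∧
    0 < ∫ x, x ∂μ ∧ r = cumTsallis s μ / ∫ x, x ∂μ}

lemma tsallisRatios_subset_Icc {s : ℝ} (hs : -1 < s) : tsallisRatios s ⊆ Icc 0 1 := by
  rintro r ⟨μ, hμ, hi, h0, hm, rfl⟩
  exact ⟨div_nonneg (cumTsallis_nonneg hs μ) hm.le,
    (div_le_one hm).2 (cumTsallis_le_integral hs μ hi h0)⟩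

lemma Ico_subset_tsallisRatios (s : ℝ) : Ico 0 1 ⊆ tsallisRatios s := by
  rintro q ⟨hq₀, hq₁⟩
  obtain ⟨p, hqp, hp₀, hp₁⟩ : ∃ p, q < tsallisFn s (1 - p) / p ∧ 0 < p ∧ p < 1 :=
    (((tendsto_tsallisFn_one_sub_div s).eventually (eventually_gt_nhds hq₁)).and
      (Ioo_mem_nhdsGT zero_lt_one)).exists
  generalize hc_def : tsallisFn s (1 - p) = c at hqp
  set d := c - q * p with hd_def
  have hd : 0 < d := by rw [lt_div_iff₀ hp₀] at hqp; linarith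
  have hc : 0 < c := hd.trans_le (sub_le_self _ (mul_nonneg hq₀ hp₀.le))
  -- this `b` makes the mean `c / d` and the entropy `(q / d) * c`
  set b := 1 + q / d with hb_def
  have hb : 1 ≤ b := le_add_of_nonneg_right (div_nonneg hq₀ hd.le)
  have hmean : ∫ x, x ∂twoPoint p b = c / d := by
    rw [integral_id_twoPoint b hp₀.le hp₁.le, hb_def]
    field_simp
    rw [hd_def]
    ring
  refine ⟨twoPoint p b, isProbabilityMeasure_twoPoint b hp₀.le hp₁.le,
    integrable_id_twoPoint p b, twoPoint_Iic_zero (zero_lt_one.trans_le hb),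
    hmean ▸ div_pos hc hd, ?_⟩
  rw [cumTsallis_twoPoint s hp₀.le hp₁.le hb, hc_def, hmean, hb_def]
  field_simp
  ring

/-- **Proposition Posa.** For every `s > −1`, the closure of the set of
ratios `Δ_s(X)/E[X]` over integrable a.s. positive random variables `X` (identified with
their laws, probability measures `μ` on `ℝ`) equals `[0,1]`; in particular
`0 ≤ Δ_s(X) ≤ E[X]` for every such `X`. -/
theorem tsallis_range_positive (s : ℝ) (hs : -1 < s) :
    closure {r : ℝ | ∃ μ : Measure ℝ, IsProbabilityMeasure μ ∧
        Integrable (id : ℝ → ℝ) μ ∧ μ (Iic 0) = 0 ∧ 0 < ∫ x, x ∂μ ∧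
        r = (∫ x in Ioi (0 : ℝ), tsallisFn s ((μ (Iic x)).toReal)) / ∫ x, x ∂μ}
      = Icc (0 : ℝ) 1
    ∧ ∀ μ : Measure ℝ, IsProbabilityMeasure μ → Integrable (id : ℝ → ℝ) μ →
        μ (Iic 0) = 0 → 0 < ∫ x, x ∂μ →
        0 ≤ (∫ x in Ioi (0 : ℝ), tsallisFn s ((μ (Iic x)).toReal))
        ∧ (∫ x in Ioi (0 : ℝ), tsallisFn s ((μ (Iic x)).toReal)) ≤ ∫ x, x ∂μ := by
  refine ⟨?_, fun μ _ hi h0 _ =>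
    ⟨cumTsallis_nonneg hs μ, cumTsallis_le_integral hs μ hi h0⟩⟩
  change closure (tsallisRatios s) = Icc 0 1
  refine (closure_minimal (tsallisRatios_subset_Icc hs) isClosed_Icc).antisymm ?_
  calc Icc (0 : ℝ) 1 = closure (Ico 0 1) := (closure_Ico zero_ne_one).symm
    _ ⊆ closure (tsallisRatios s) := closure_mono (Ico_subset_tsallisRatios s)
end

section
/- Let X be a square-integrable real random variable with continuous cumulative distribution function and Var X = 1. Then the cumulative residual entropy satisfies Δ̄_0(X) = −∫_ℝ F̄_X(x) log F̄_X(x) dx ≤ 1, with equality if and only if X − E[X] + 1 has the standard exponential distribution (density e^{−x} on (0,∞)). In other words, up to translation the standard exponential random variable is the unique maximizer of the cumulative residual entropy among unit-variance random variables. -/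
/-!
Let `G` be the survival function of `X`, put `a = 𝔼 X - 1`, and let `V x = min 1 (exp (a - x))`
be the survival function of `a + Exp(1)`. Gibbs' inequality `V * klFun (G / V) ≥ 0`, with
`log V x = -(x - a)⁺`, integrates to
`-∫ G log G ≤ ∫ G(x) (x - a)⁺ dx + ∫ (V - G) = 𝔼[((X - a)⁺)²] / 2 + 1 - (𝔼 X - a)`,
both integrals being computed by Tonelli, and the right side is at most
`𝔼[(X - a)²] / 2 = (Var X + 1) / 2 = 1`. Equality forces `G = V` almost everywhere, hence
everywhere since both are right-continuous, which says that `X - a` is standard exponential.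
-/

open MeasureTheory Set

/-- The variance of a probability measure `μ` on `ℝ`. -/
noncomputable def mVar (μ : Measure ℝ) : ℝ :=
  ∫ x, (x - ∫ y, y ∂μ) ^ 2 ∂μ

/-- The standard exponential distribution, with density `e^{−x}` on `(0,∞)`. -/
noncomputable def stdExp : Measure ℝ :=
  (volume : Measure ℝ).withDensity fun x => ENNReal.ofReal (if 0 < x then Real.exp (-x) else 0)

open Real ProbabilityTheory InformationTheory
open scoped ENNReal

theorem lintegral_mul_measure_prodMk_preimage {α β : Type*} [MeasurableSpace α]
    [MeasurableSpace β] (ν : Measure α) (μ : Measure β) [SFinite ν] [SFinite μ]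
    {g : α → ℝ≥0∞} (hg : Measurable g) {s : Set (α × β)} (hs : MeasurableSet s) :
    ∫⁻ x, g x * μ (Prod.mk x ⁻¹' s) ∂ν = ∫⁻ y, ∫⁻ x in (fun x => (x, y)) ⁻¹' s, g x ∂ν ∂μ := by
  have h :=
    lintegral_withDensity_eq_lintegral_mul ν hg (measurable_measure_prodMk_left (ν := μ) hs)
  simp only [Pi.mul_apply] at h
  rw [← h, ← Measure.prod_apply hs, Measure.prod_apply_symm hs]
  exact lintegral_congr fun y => withDensity_apply _ (measurable_prodMk_right hs)

theorem lintegral_Ioi_measure_Ioi (μ : Measure ℝ) [SFinite μ] (a : ℝ) :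
    ∫⁻ x in Ioi a, μ (Ioi x) = ∫⁻ y, ENNReal.ofReal (y - a) ∂μ := by
  have h := lintegral_mul_measure_prodMk_preimage (volume.restrict (Ioi a)) μ (g := 1)
    measurable_const (measurableSet_lt measurable_fst measurable_snd)
  simp only [Pi.one_apply, one_mul, setLIntegral_one] at h
  refine h.trans (lintegral_congr fun y => ?_)
  change volume.restrict (Ioi a) (Iio y) = _
  rw [Measure.restrict_apply measurableSet_Iio, Iio_inter_Ioi, Real.volume_Ioo]

theorem lintegral_Iic_measure_Iic (μ : Measure ℝ) [SFinite μ] (a : ℝ) :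
    ∫⁻ x in Iic a, μ (Iic x) = ∫⁻ y, ENNReal.ofReal (a - y) ∂μ := by
  have h := lintegral_mul_measure_prodMk_preimage (volume.restrict (Iic a)) μ (g := 1)
    measurable_const (measurableSet_le measurable_snd measurable_fst)
  simp only [Pi.one_apply, one_mul, setLIntegral_one] at h
  refine h.trans (lintegral_congr fun y => ?_)
  change volume.restrict (Iic a) (Ici y) = _
  rw [Measure.restrict_apply measurableSet_Ici, Ici_inter_Iic, Real.volume_Icc]

theorem setLIntegral_Ioo_ofReal_sub (a y : ℝ) :
    ∫⁻ x in Ioo a y, ENNReal.ofReal (x - a) = ENNReal.ofReal (max (y - a) 0 ^ 2 / 2) := by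
  rcases le_or_gt y a with hya | hay
  · simp [Ioo_eq_empty_of_le hya, max_eq_right (sub_nonpos.2 hya)]
  rw [← ofReal_integral_eq_lintegral_ofReal, ← integral_Ioc_eq_integral_Ioo,
    ← intervalIntegral.integral_of_le hay.le, intervalIntegral.integral_comp_sub_right
      (fun x => x), integral_id, max_eq_left (sub_nonneg.2 hay.le)]
  · ring_nf
  · exact (continuous_id.sub continuous_const).integrableOn_Icc.mono_set Ioo_subset_Icc_self
  · filter_upwards [ae_restrict_mem measurableSet_Ioo] with x hx
    exact sub_nonneg.2 hx.1.le

theorem setLIntegral_Iio_ofReal_sub (a y : ℝ) :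
    ∫⁻ x in Iio y, ENNReal.ofReal (x - a) = ENNReal.ofReal (max (y - a) 0 ^ 2 / 2) := by
  have hsupp :
      (Ioi a).indicator (fun x => ENNReal.ofReal (x - a)) = fun x => ENNReal.ofReal (x - a) :=
    indicator_eq_self.2 fun x hx => sub_pos.1 (ENNReal.ofReal_pos.1 (pos_iff_ne_zero.2 hx))
  rw [← hsupp, lintegral_indicator measurableSet_Ioi, Measure.restrict_restrict measurableSet_Ioi,
    Ioi_inter_Iio, setLIntegral_Ioo_ofReal_sub]

theorem lintegral_ofReal_sub_mul_measure_Ioi (μ : Measure ℝ) [SFinite μ] (a : ℝ) :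
    ∫⁻ x, ENNReal.ofReal (x - a) * μ (Ioi x)
      = ∫⁻ y, ENNReal.ofReal (max (y - a) 0 ^ 2 / 2) ∂μ :=
  (lintegral_mul_measure_prodMk_preimage volume μ (measurable_id.sub_const a).ennreal_ofReal
    (measurableSet_lt measurable_fst measurable_snd)).trans
    (lintegral_congr fun y => setLIntegral_Iio_ofReal_sub a y)

theorem integrable_and_integral_eq_of_lintegral_ofReal_eq {α β : Type*} [MeasurableSpace α]
    [MeasurableSpace β] {ν : Measure α} {μ : Measure β} {f : α → ℝ} {g : β → ℝ}
    (hf : AEStronglyMeasurable f ν) (hf0 : 0 ≤ᵐ[ν] f) (hg : Integrable g μ) (hg0 : 0 ≤ᵐ[μ] g)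
    (h : ∫⁻ x, ENNReal.ofReal (f x) ∂ν = ∫⁻ y, ENNReal.ofReal (g y) ∂μ) :
    Integrable f ν ∧ ∫ x, f x ∂ν = ∫ y, g y ∂μ :=
  ⟨⟨hf, (hasFiniteIntegral_iff_ofReal hf0).2 (h ▸ (hasFiniteIntegral_iff_ofReal hg0).1 hg.2)⟩,
    by rw [integral_eq_lintegral_of_nonneg_ae hf0 hf,
      integral_eq_lintegral_of_nonneg_ae hg0 hg.1, h]⟩

theorem measurable_measure_Ioi (μ : Measure ℝ) : Measurable fun x => μ (Ioi x) :=
  Antitone.measurable fun _ _ hxy => measure_mono (Ioi_subset_Ioi hxy)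

theorem measurable_measure_Iic (μ : Measure ℝ) : Measurable fun x => μ (Iic x) :=
  Monotone.measurable fun _ _ hxy => measure_mono (Iic_subset_Iic.2 hxy)

theorem memLp_two_id {μ : Measure ℝ} (hL2 : Integrable (fun x : ℝ => x ^ 2) μ) :
    MemLp (fun x : ℝ => x) 2 μ :=
  (memLp_two_iff_integrable_sq measurable_id.aestronglyMeasurable).2 hL2

theorem posPart_sq_le_sq (t : ℝ) : max t 0 ^ 2 ≤ t ^ 2 :=
  (pow_le_pow_left₀ (le_max_right _ _) (max_le (le_abs_self t) (abs_nonneg t)) 2).trans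
    (sq_abs t).le

section FiniteMeasure

variable {μ : Measure ℝ} [IsFiniteMeasure μ]

theorem integrable_sub_sq (hL2 : Integrable (fun x : ℝ => x ^ 2) μ) (a : ℝ) :
    Integrable (fun y : ℝ => (y - a) ^ 2) μ :=
  ((memLp_two_id hL2).sub (memLp_const a)).integrable_sq

theorem integrable_posPart_sub_sq (hL2 : Integrable (fun x : ℝ => x ^ 2) μ) (a : ℝ) :
    Integrable (fun y : ℝ => max (y - a) 0 ^ 2) μ := by
  refine (integrable_sub_sq hL2 a).mono' (by fun_prop) (ae_of_all _ fun y => ?_)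
  rw [Real.norm_of_nonneg (by positivity)]
  exact posPart_sq_le_sq _

theorem integrableOn_and_setIntegral_Ioi_measure_Ioi (hX : Integrable (fun y : ℝ => y) μ)
    (a : ℝ) :
    IntegrableOn (fun x => (μ (Ioi x)).toReal) (Ioi a) ∧
      ∫ x in Ioi a, (μ (Ioi x)).toReal = ∫ y, max (y - a) 0 ∂μ :=
  integrable_and_integral_eq_of_lintegral_ofReal_eq
    (measurable_measure_Ioi μ).ennreal_toReal.aestronglyMeasurable
    (ae_of_all _ fun _ => ENNReal.toReal_nonneg) (hX.sub (integrable_const a)).pos_part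
    (ae_of_all _ fun _ => le_max_right _ _)
    (by simpa [ENNReal.ofReal_toReal (measure_ne_top μ _)] using lintegral_Ioi_measure_Ioi μ a)

theorem integrableOn_and_setIntegral_Iic_measure_Iic (hX : Integrable (fun y : ℝ => y) μ)
    (a : ℝ) :
    IntegrableOn (fun x => (μ (Iic x)).toReal) (Iic a) ∧
      ∫ x in Iic a, (μ (Iic x)).toReal = ∫ y, max (a - y) 0 ∂μ :=
  integrable_and_integral_eq_of_lintegral_ofReal_eq
    (measurable_measure_Iic μ).ennreal_toReal.aestronglyMeasurable
    (ae_of_all _ fun _ => ENNReal.toReal_nonneg) ((integrable_const a).sub hX).pos_part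
    (ae_of_all _ fun _ => le_max_right _ _)
    (by simpa [ENNReal.ofReal_toReal (measure_ne_top μ _)] using lintegral_Iic_measure_Iic μ a)

theorem integrable_and_integral_measure_Ioi_mul_posPart
    (hL2 : Integrable (fun x : ℝ => x ^ 2) μ) (a : ℝ) :
    Integrable (fun x => (μ (Ioi x)).toReal * max (x - a) 0) ∧
      ∫ x, (μ (Ioi x)).toReal * max (x - a) 0 = ∫ y, max (y - a) 0 ^ 2 / 2 ∂μ := by
  refine integrable_and_integral_eq_of_lintegral_ofReal_eq
    ((measurable_measure_Ioi μ).ennreal_toReal.mul (by fun_prop)).aestronglyMeasurable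
    (ae_of_all _ fun _ => by positivity) ((integrable_posPart_sub_sq hL2 a).div_const 2)
    (ae_of_all _ fun _ => by positivity) ?_
  rw [← lintegral_ofReal_sub_mul_measure_Ioi]
  refine lintegral_congr fun x => ?_
  rw [ENNReal.ofReal_mul ENNReal.toReal_nonneg, ENNReal.ofReal_toReal (measure_ne_top μ _),
    ENNReal.ofReal_max, ENNReal.ofReal_zero, max_eq_left zero_le, mul_comm]

end FiniteMeasure

theorem measure_Ioi_toReal_eq_one_sub_cdf (μ : Measure ℝ) [IsProbabilityMeasure μ] (x : ℝ) :
    (μ (Ioi x)).toReal = 1 - cdf μ x := by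
  rw [cdf_eq_real, ← probReal_compl_eq_one_sub measurableSet_Iic, compl_Iic, measureReal_def]

theorem continuousWithinAt_measure_Ioi_toReal (μ : Measure ℝ) [IsProbabilityMeasure μ] (x : ℝ) :
    ContinuousWithinAt (fun x => (μ (Ioi x)).toReal) (Ici x) x := by
  simp_rw [measure_Ioi_toReal_eq_one_sub_cdf]
  exact continuousWithinAt_const.sub ((cdf μ).right_continuous x)

theorem eq_of_ae_eq_of_continuousWithinAt_Ici {μ : Measure ℝ} [μ.IsOpenPosMeasure]
    {f g : ℝ → ℝ} (hfg : f =ᵐ[μ] g) (hf : ∀ x, ContinuousWithinAt f (Ici x) x)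
    (hg : ∀ x, ContinuousWithinAt g (Ici x) x) : f = g := by
  funext x
  have hx : x ∈ closure (Ioi x ∩ {y | f y = g y}) := by
    refine Metric.mem_closure_iff.2 fun ε hε => ?_
    have hpos : μ (Ioo x (x + ε)) ≠ 0 :=
      (isOpen_Ioo.measure_pos μ (nonempty_Ioo.2 (by linarith))).ne'
    have := ae_restrict_neBot.2 hpos
    obtain ⟨y, hy, hfgy⟩ :=
      ((ae_restrict_mem (s := Ioo x (x + ε)) measurableSet_Ioo).and (ae_restrict_of_ae hfg)).exists
    refine ⟨y, ⟨hy.1, hfgy⟩, ?_⟩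
    rw [Real.dist_eq, abs_of_neg (by linarith [hy.1])]
    linarith [hy.2]
  have := mem_closure_iff_nhdsWithin_neBot.1 hx
  have hsub : Ioi x ∩ {y | f y = g y} ⊆ Ici x := inter_subset_left.trans Ioi_subset_Ici_self
  exact tendsto_nhds_unique_of_eventuallyEq ((hf x).mono hsub) ((hg x).mono hsub)
    (eventually_nhdsWithin_of_forall fun y hy => hy.2)

theorem setIntegral_Ioi_exp_sub (a : ℝ) : ∫ x in Ioi a, exp (a - x) = 1 := by
  simp_rw [sub_eq_add_neg, exp_add]
  rw [integral_const_mul, integral_exp_neg_Ioi, ← exp_add, add_neg_cancel, exp_zero]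

theorem log_min_one_exp_sub (a x : ℝ) : log (min 1 (exp (a - x))) = -max (x - a) 0 := by
  rcases le_total x a with h | h
  · rw [min_eq_left (one_le_exp (sub_nonneg.2 h)), log_one, max_eq_right (sub_nonpos.2 h),
      neg_zero]
  · rw [min_eq_right (exp_le_one_iff.2 (sub_nonpos.2 h)), log_exp, max_eq_left (sub_nonneg.2 h),
      neg_sub]

theorem stdExp_eq_expMeasure : stdExp = expMeasure 1 := by
  refine withDensity_congr_ae ?_
  filter_upwards [compl_mem_ae_iff.2 (measure_singleton (0 : ℝ))] with x hx
  refine Eq.trans ?_ (exponentialPDF_eq 1 x).symm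
  rcases lt_trichotomy x 0 with h | h | h
  · simp [not_le.2 h, not_lt.2 h.le]
  · exact absurd h hx
  · simp [h, h.le]

instance : IsProbabilityMeasure stdExp :=
  stdExp_eq_expMeasure ▸ isProbabilityMeasure_expMeasure one_pos

theorem stdExp_Ioi_toReal (t : ℝ) : (stdExp (Ioi t)).toReal = min 1 (exp (-t)) := by
  rw [measure_Ioi_toReal_eq_one_sub_cdf, stdExp_eq_expMeasure, cdf_expMeasure_eq one_pos, one_mul]
  split_ifs with ht
  · rw [min_eq_right (exp_le_one_iff.2 (neg_nonpos.2 ht))]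
    ring
  · rw [min_eq_left (one_le_exp (by linarith)), sub_zero]

theorem map_sub_eq_stdExp_iff (μ : Measure ℝ) [IsProbabilityMeasure μ] (c : ℝ) :
    μ.map (fun x => x - c) = stdExp ↔ ∀ x, (μ (Ioi x)).toReal = min 1 (exp (c - x)) := by
  have hmeas : Measurable fun x : ℝ => x - c := measurable_sub_const c
  have := Measure.isProbabilityMeasure_map (μ := μ) hmeas.aemeasurable
  rw [← Measure.cdf_eq_iff, StieltjesFunction.ext_iff]
  refine (Equiv.addRight c).forall_congr fun {x} => ?_
  rw [Equiv.coe_addRight, ← sub_right_inj (a := (1 : ℝ)), ← measure_Ioi_toReal_eq_one_sub_cdf,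
    ← measure_Ioi_toReal_eq_one_sub_cdf, stdExp_Ioi_toReal,
    Measure.map_apply hmeas measurableSet_Ioi, preimage_sub_const_Ioi,
    show c - (x + c) = -x by ring]

theorem mul_klFun_div (u : ℝ) {v : ℝ} (hv : 0 < v) :
    v * klFun (u / v) = u * log u - u * log v + v - u := by
  rcases eq_or_ne u 0 with rfl | hu
  · simp [klFun_apply]
  rw [klFun_apply, log_div hu hv.ne']
  field_simp

/-- The Gibbs defect `V * klFun (G / V) = G log G - G log V + V - G ≥ 0` between the survival
function `G` of `μ` and the survival function `V x = min 1 (exp (a - x))` of `a + Exp(1)`. -/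
noncomputable def survivalKL (μ : Measure ℝ) (a x : ℝ) : ℝ :=
  min 1 (exp (a - x)) * klFun ((μ (Ioi x)).toReal / min 1 (exp (a - x)))

theorem survivalKL_nonneg (μ : Measure ℝ) (a x : ℝ) : 0 ≤ survivalKL μ a x := by
  have hpos : 0 < min 1 (exp (a - x)) := lt_min one_pos (exp_pos _)
  exact mul_nonneg hpos.le (klFun_nonneg (div_nonneg ENNReal.toReal_nonneg hpos.le))

section ProbabilityMeasure

variable {μ : Measure ℝ} [IsProbabilityMeasure μ]

theorem integral_posPart_sub_sub_integral_posPart_sub (hX : Integrable (fun y : ℝ => y) μ)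
    (a : ℝ) : ∫ y, max (y - a) 0 ∂μ - ∫ y, max (a - y) 0 ∂μ = (∫ y, y ∂μ) - a := by
  have hpos : Integrable (fun y => max (y - a) 0) μ := (hX.sub (integrable_const a)).pos_part
  have hneg : Integrable (fun y => max (a - y) 0) μ := ((integrable_const a).sub hX).pos_part
  simp_rw [← integral_sub hpos hneg, ← neg_sub _ a, max_zero_sub_max_neg_zero_eq_self]
  rw [integral_sub hX (integrable_const a), integral_const, probReal_univ, one_smul]

theorem integrable_and_integral_min_exp_sub_measure_Ioi (hX : Integrable (fun y : ℝ => y) μ)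
    (a : ℝ) :
    Integrable (fun x => min 1 (exp (a - x)) - (μ (Ioi x)).toReal) ∧
      ∫ x, (min 1 (exp (a - x)) - (μ (Ioi x)).toReal) = 1 - ((∫ y, y ∂μ) - a) := by
  obtain ⟨hIoi, hIoi_eq⟩ := integrableOn_and_setIntegral_Ioi_measure_Ioi hX a
  obtain ⟨hIic, hIic_eq⟩ := integrableOn_and_setIntegral_Iic_measure_Iic hX a
  have hexp : IntegrableOn (fun x => exp (a - x)) (Ioi a) :=
    Integrable.of_integral_ne_zero (by rw [setIntegral_Ioi_exp_sub]; exact one_ne_zero)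
  have hleft : EqOn (fun x => (μ (Iic x)).toReal)
      (fun x => min 1 (exp (a - x)) - (μ (Ioi x)).toReal) (Iic a) := fun x hx => by
    dsimp only
    rw [min_eq_left (one_le_exp (sub_nonneg.2 hx)), measure_Ioi_toReal_eq_one_sub_cdf,
      cdf_eq_real, measureReal_def]
    ring
  have hright : EqOn (fun x => exp (a - x) - (μ (Ioi x)).toReal)
      (fun x => min 1 (exp (a - x)) - (μ (Ioi x)).toReal) (Ioi a) := fun x hx => by
    dsimp only
    rw [min_eq_right (exp_le_one_iff.2 (sub_nonpos.2 (le_of_lt hx)))]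
  have hint : Integrable fun x => min 1 (exp (a - x)) - (μ (Ioi x)).toReal := by
    simpa using (hIic.congr_fun hleft measurableSet_Iic).union
      ((hexp.sub hIoi).congr_fun hright measurableSet_Ioi)
  refine ⟨hint, ?_⟩
  rw [← integral_add_compl measurableSet_Iic hint, compl_Iic,
    ← setIntegral_congr_fun measurableSet_Iic hleft,
    ← setIntegral_congr_fun measurableSet_Ioi hright, integral_sub hexp hIoi,
    setIntegral_Ioi_exp_sub, hIoi_eq, hIic_eq, ← integral_posPart_sub_sub_integral_posPart_sub hX]
  ring

theorem integral_sub_sq_eq_mVar_add (hL2 : Integrable (fun x : ℝ => x ^ 2) μ) (a : ℝ) :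
    ∫ y, (y - a) ^ 2 ∂μ = mVar μ + ((∫ y, y ∂μ) - a) ^ 2 := by
  set m := ∫ y, y ∂μ
  have hX := (memLp_two_id hL2).integrable one_le_two
  have hcen : Integrable (fun y => 2 * (m - a) * (y - m)) μ :=
    (hX.sub (integrable_const m)).const_mul _
  have hlin : Integrable (fun y => 2 * (m - a) * (y - m) + (m - a) ^ 2) μ :=
    hcen.add (integrable_const _)
  calc ∫ y, (y - a) ^ 2 ∂μ
      = ∫ y, ((y - m) ^ 2 + (2 * (m - a) * (y - m) + (m - a) ^ 2)) ∂μ := by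
        congr 1
        funext y
        ring
    _ = mVar μ + (m - a) ^ 2 := by
        rw [integral_add (integrable_sub_sq hL2 m) hlin, integral_add hcen (integrable_const _),
          integral_const_mul, integral_sub hX (integrable_const m), integral_const, integral_const]
        simp [mVar, m]

theorem integrable_and_integral_mul_log_measure_Ioi (hL2 : Integrable (fun x : ℝ => x ^ 2) μ)
    (a : ℝ) :
    Integrable (survivalKL μ a) ∧ ∫ x, (μ (Ioi x)).toReal * log ((μ (Ioi x)).toReal)
      = (∫ x, survivalKL μ a x) - (∫ y, max (y - a) 0 ^ 2 ∂μ) / 2 - (1 - ((∫ y, y ∂μ) - a)) := by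
  have hKL : ∀ x, survivalKL μ a x
      = (μ (Ioi x)).toReal * log ((μ (Ioi x)).toReal) + (μ (Ioi x)).toReal * max (x - a) 0
        + (min 1 (exp (a - x)) - (μ (Ioi x)).toReal) := fun x => by
    rw [survivalKL, mul_klFun_div _ (lt_min one_pos (exp_pos _)), log_min_one_exp_sub]
    ring
  obtain ⟨hi1, hi1_eq⟩ := integrable_and_integral_measure_Ioi_mul_posPart hL2 a
  obtain ⟨hi2, hi2_eq⟩ :=
    integrable_and_integral_min_exp_sub_measure_Ioi ((memLp_two_id hL2).integrable one_le_two) a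
  have hmeas := (measurable_measure_Ioi μ).ennreal_toReal
  -- `|G log G| = -G log G`, which `hKL` and `survivalKL ≥ 0` bound by the two integrable terms
  have hf : Integrable fun x => (μ (Ioi x)).toReal * log ((μ (Ioi x)).toReal) := by
    refine (hi1.add hi2).mono' (hmeas.mul hmeas.log).aestronglyMeasurable
      (ae_of_all _ fun x => ?_)
    have := survivalKL_nonneg μ a x
    rw [hKL] at this
    rw [Real.norm_of_nonpos (mul_log_nonpos ENNReal.toReal_nonneg measureReal_le_one)]
    simp only [Pi.add_apply]
    linarith
  have hfi1 : Integrable fun x =>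
      (μ (Ioi x)).toReal * log ((μ (Ioi x)).toReal) + (μ (Ioi x)).toReal * max (x - a) 0 :=
    hf.add hi1
  rw [show survivalKL μ a = _ from funext hKL]
  refine ⟨hfi1.add hi2, ?_⟩
  rw [integral_add hfi1 hi2, integral_add hf hi1, hi1_eq, hi2_eq, integral_div]
  ring

theorem measure_Ioi_toReal_eq_of_integral_survivalKL_eq_zero {a : ℝ}
    (hint : Integrable (survivalKL μ a)) (h0 : ∫ x, survivalKL μ a x = 0) (x : ℝ) :
    (μ (Ioi x)).toReal = min 1 (exp (a - x)) := by
  have hae := (integral_eq_zero_iff_of_nonneg (survivalKL_nonneg μ a) hint).1 h0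
  have hG : (fun x => (μ (Ioi x)).toReal) =ᵐ[volume] fun x => min 1 (exp (a - x)) := by
    filter_upwards [hae] with x hx
    have hpos : 0 < min 1 (exp (a - x)) := lt_min one_pos (exp_pos _)
    rwa [Pi.zero_apply, survivalKL, mul_eq_zero, or_iff_right hpos.ne',
      klFun_eq_zero_iff (div_nonneg ENNReal.toReal_nonneg hpos.le),
      div_eq_one_iff_eq hpos.ne'] at hx
  refine congrFun (eq_of_ae_eq_of_continuousWithinAt_Ici hG
    (continuousWithinAt_measure_Ioi_toReal μ) fun x => ?_) x
  exact (continuous_const.min (continuous_exp.comp (continuous_const.sub continuous_id)))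
    |>.continuousWithinAt

theorem integral_posPart_sub_sq_eq_of_measure_Ioi (a : ℝ) (h : (μ (Ioi a)).toReal = 1) :
    ∫ y, max (y - a) 0 ^ 2 ∂μ = ∫ y, (y - a) ^ 2 ∂μ := by
  refine integral_congr_ae ?_
  filter_upwards [(mem_ae_iff_prob_eq_one measurableSet_Ioi).2
    ((ENNReal.toReal_eq_one_iff _).1 h)] with y hy
  rw [max_eq_left (sub_nonneg.2 (le_of_lt hy))]

end ProbabilityMeasure

theorem exponential_maximizes_CRE_general (μ : Measure ℝ) [IsProbabilityMeasure μ]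
    (hL2 : Integrable (fun x : ℝ => x ^ 2) μ)
    (hvar : mVar μ = 1) :
    (-∫ x : ℝ, (μ (Ioi x)).toReal * Real.log ((μ (Ioi x)).toReal)) ≤ 1
    ∧ ((-∫ x : ℝ, (μ (Ioi x)).toReal * Real.log ((μ (Ioi x)).toReal)) = 1
        ↔ Measure.map (fun x => x - (∫ y, y ∂μ) + 1) μ = stdExp) := by
  set m := ∫ y, y ∂μ
  obtain ⟨hKL_int, hkey⟩ := integrable_and_integral_mul_log_measure_Ioi hL2 (m - 1)
  have hKL_nonneg : 0 ≤ ∫ x, survivalKL μ (m - 1) x :=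
    integral_nonneg (survivalKL_nonneg μ (m - 1))
  have hsq : ∫ y, (y - (m - 1)) ^ 2 ∂μ = 2 := by
    rw [integral_sub_sq_eq_mVar_add hL2, hvar]
    ring
  have hS : ∫ y, max (y - (m - 1)) 0 ^ 2 ∂μ ≤ 2 := hsq ▸ integral_mono
    (integrable_posPart_sub_sq hL2 _) (integrable_sub_sq hL2 _) fun y => posPart_sq_le_sq _
  have hshift : (fun x => x - m + 1) = fun x => x - (m - 1) := by
    funext x
    ring
  rw [hshift, map_sub_eq_stdExp_iff]
  refine ⟨by linarith, fun h => measure_Ioi_toReal_eq_of_integral_survivalKL_eq_zero hKL_int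
    (by linarith), fun h => ?_⟩
  have hKL_zero : ∫ x, survivalKL μ (m - 1) x = 0 := by
    simp [survivalKL, h, div_self (lt_min one_pos (exp_pos _)).ne', klFun_one]
  have hS_eq := integral_posPart_sub_sq_eq_of_measure_Ioi (m - 1) (by simpa using h (m - 1))
  linarith

/-- For a square-integrable real random variable `X` (with law `μ`) with
continuous cdf and unit variance, the cumulative residual entropy satisfies
`Δ̄_0(X) = −∫ F̄ log F̄ ≤ 1`, with equality iff `X − E[X] + 1` is standard exponential. -/
theorem exponential_maximizes_CRE (μ : Measure ℝ) [IsProbabilityMeasure μ]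
    (hcont : Continuous fun x => (μ (Iic x)).toReal)
    (hL2 : Integrable (fun x : ℝ => x ^ 2) μ)
    (hvar : mVar μ = 1) :
    (-∫ x : ℝ, (μ (Ioi x)).toReal * Real.log ((μ (Ioi x)).toReal)) ≤ 1
    ∧ ((-∫ x : ℝ, (μ (Ioi x)).toReal * Real.log ((μ (Ioi x)).toReal)) = 1
        ↔ Measure.map (fun x => x - (∫ y, y ∂μ) + 1) μ = stdExp) :=
  exponential_maximizes_CRE_general μ hL2 hvar
end
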